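/- arXiv:1505.03606 — 10 statements merged into one kernel-verified Lean document; each statement's English description precedes it below -/
import Mathlib

section
/- Let E be a convex function on a Banach space X and S ⊆ X. Then for every u > 0, 4·ρ(E, u/2) ≤ ρ₁(E, u) ≤ 2·ρ(E, u), where ρ is the modulus of smoothness and ρ₁ the modulus of uniform smoothness of E on S. -/
/-- The modulus of smoothness of `E` on `S`. -/
noncomputable def modSmooth {X : Type*} [NormedAddCommGroup X] [NormedSpace ℝ X]
    (E : X → ℝ) (S : Set X) (u : ℝ) : ℝ :=
  (1 / 2) * sSup {v : ℝ | ∃ x ∈ S, ∃ y : X, ‖y‖ = 1 ∧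
    v = E (x + u • y) + E (x - u • y) - 2 * E x}

/-- The modulus of uniform smoothness of `E` on `S`. -/
noncomputable def modUnifSmooth {X : Type*} [NormedAddCommGroup X] [NormedSpace ℝ X]
    (E : X → ℝ) (S : Set X) (u : ℝ) : ℝ :=
  sSup {v : ℝ | ∃ x ∈ S, ∃ y : X, ‖y‖ = 1 ∧ ∃ l : ℝ, 0 < l ∧ l < 1 ∧
    v = ((1 - l) * E (x - (l * u) • y) + l * E (x + ((1 - l) * u) • y) - E x) / (l * (1 - l))}

theorem modSmooth_equiv_modUnifSmooth
    {X : Type*} [NormedAddCommGroup X] [NormedSpace ℝ X] [CompleteSpace X]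
    (E : X → ℝ) (S : Set X)
    (hE : ConvexOn ℝ Set.univ E)
    (hS : S.Nonempty) (hy : ∃ y : X, ‖y‖ = 1)
    (u : ℝ) (hu : 0 < u)
    (hbdd : BddAbove {v : ℝ | ∃ x ∈ S, ∃ y : X, ‖y‖ = 1 ∧
      v = E (x + u • y) + E (x - u • y) - 2 * E x})
    (hbdd' : BddAbove {v : ℝ | ∃ x ∈ S, ∃ y : X, ‖y‖ = 1 ∧ ∃ l : ℝ, 0 < l ∧ l < 1 ∧
      v = ((1 - l) * E (x - (l * u) • y) + l * E (x + ((1 - l) * u) • y) - E x) / (l * (1 - l))})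
    (hbdd2 : BddAbove {v : ℝ | ∃ x ∈ S, ∃ y : X, ‖y‖ = 1 ∧
      v = E (x + (u / 2) • y) + E (x - (u / 2) • y) - 2 * E x}) :
    4 * modSmooth E S (u / 2) ≤ modUnifSmooth E S u ∧
      modUnifSmooth E S u ≤ 2 * modSmooth E S u := by
  obtain ⟨x₀, hx₀⟩ := hS
  obtain ⟨y₀, hy₀⟩ := hy
  set A2 := {v : ℝ | ∃ x ∈ S, ∃ y : X, ‖y‖ = 1 ∧
      v = E (x + (u / 2) • y) + E (x - (u / 2) • y) - 2 * E x} with hA2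
  set A := {v : ℝ | ∃ x ∈ S, ∃ y : X, ‖y‖ = 1 ∧
      v = E (x + u • y) + E (x - u • y) - 2 * E x} with hA
  set B := {v : ℝ | ∃ x ∈ S, ∃ y : X, ‖y‖ = 1 ∧ ∃ l : ℝ, 0 < l ∧ l < 1 ∧
      v = ((1 - l) * E (x - (l * u) • y) + l * E (x + ((1 - l) * u) • y) - E x) / (l * (1 - l))}
    with hB
  have hA2ne : A2.Nonempty := ⟨_, x₀, hx₀, y₀, hy₀, rfl⟩
  have hAne : A.Nonempty := ⟨_, x₀, hx₀, y₀, hy₀, rfl⟩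
  have hBne : B.Nonempty :=
    ⟨_, x₀, hx₀, y₀, hy₀, (1:ℝ)/2, by norm_num, by norm_num, rfl⟩
  constructor
  · -- 4 * (1/2) * sSup A2 ≤ sSup B
    have h : sSup A2 ≤ sSup B / 2 := by
      apply csSup_le hA2ne
      rintro v ⟨x, hx, y, hy1, rfl⟩
      have hmem : 2 * (E (x + (u / 2) • y) + E (x - (u / 2) • y) - 2 * E x) ∈ B := by
        refine ⟨x, hx, y, hy1, (1:ℝ)/2, by norm_num, by norm_num, ?_⟩
        have e1 : ((1:ℝ)/2 * u) = u / 2 := by ring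
        have e2 : ((1 - (1:ℝ)/2) * u) = u / 2 := by ring
        rw [e1, e2]
        ring
      have := le_csSup hbdd' hmem
      linarith
    unfold modSmooth
    rw [← hA2]
    unfold modUnifSmooth
    rw [← hB]
    linarith
  · -- sSup B ≤ 2 * (1/2) * sSup A
    have h : sSup B ≤ sSup A := by
      apply csSup_le hBne
      rintro v ⟨x, hx, y, hy1, l, hl0, hl1, rfl⟩
      have hmem : E (x + u • y) + E (x - u • y) - 2 * E x ∈ A := ⟨x, hx, y, hy1, rfl⟩
      have hle := le_csSup hbdd hmem
      refine le_trans ?_ hle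
      have h1 : E (x - (l * u) • y) ≤ l * E (x - u • y) + (1 - l) * E x := by
        have hc := hE.2 (Set.mem_univ (x - u • y)) (Set.mem_univ x) hl0.le
          (by linarith : (0:ℝ) ≤ 1 - l) (by ring)
        have he : l • (x - u • y) + (1 - l) • x = x - (l * u) • y := by
          rw [smul_sub, sub_smul, one_smul, smul_smul]
          abel
        rwa [he] at hc
      have h2 : E (x + ((1 - l) * u) • y) ≤ (1 - l) * E (x + u • y) + l * E x := by
        have hc := hE.2 (Set.mem_univ (x + u • y)) (Set.mem_univ x)
          (by linarith : (0:ℝ) ≤ 1 - l) hl0.le (by ring)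
        have he : (1 - l) • (x + u • y) + l • x = x + ((1 - l) * u) • y := by
          rw [smul_add, sub_smul, one_smul, smul_smul]
          abel
        rwa [he] at hc
      rw [div_le_iff₀ (by nlinarith : (0:ℝ) < l * (1 - l))]
      nlinarith [mul_le_mul_of_nonneg_left h1 (by linarith : (0:ℝ) ≤ 1 - l),
        mul_le_mul_of_nonneg_left h2 hl0.le]
    unfold modSmooth
    rw [← hA]
    unfold modUnifSmooth
    rw [← hB]
    linarith
end

section
/- Let E be a convex function on a Banach space X, Fréchet differentiable on S ⊆ X, let 1 < q ≤ 2 and M > 0. Then the following are equivalent: (i) there exists α > 0 such that for all x ∈ S, x' ∈ X with ‖x - x'‖ ≤ M, E(x') - E(x) - ⟨E'(x), x' - x⟩ ≤ α‖x' - x‖^q; (ii) there exists α₁ > 0 such that ρ(E, u, S) ≤ α₁ u^q for all 0 < u ≤ M. -/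
open Filter Topology

lemma convex_subgradient_ineq
    {X : Type*} [NormedAddCommGroup X] [NormedSpace ℝ X]
    (E : X → ℝ) (f : X →L[ℝ] ℝ) (x : X)
    (hE : ConvexOn ℝ Set.univ E) (hf : HasFDerivAt E f x) (v : X) :
    f v ≤ E (x + v) - E x := by
  have hline : HasDerivAt (fun t : ℝ => x + t • v) v 0 := by
    simpa using ((hasDerivAt_id (0:ℝ)).smul_const v).const_add x
  have hg : HasDerivAt (fun t : ℝ => E (x + t • v)) (f v) 0 := by
    have hf' : HasFDerivAt E f ((fun t : ℝ => x + t • v) 0) := by simpa using hf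
    exact hf'.comp_hasDerivAt 0 hline
  rw [hasDerivAt_iff_tendsto_slope] at hg
  have hmono : 𝓝[>] (0:ℝ) ≤ 𝓝[≠] (0:ℝ) :=
    nhdsWithin_mono 0 (fun t ht => ne_of_gt ht)
  refine le_of_tendsto (hg.mono_left hmono) ?_
  filter_upwards [Ioc_mem_nhdsGT_of_mem (by norm_num : (0:ℝ) ∈ Set.Ico 0 1)]
    with t ht
  obtain ⟨ht0, ht1⟩ := ht
  have hcv := hE.2 (Set.mem_univ x) (Set.mem_univ (x + v))
    (show (0:ℝ) ≤ 1 - t by linarith) (le_of_lt ht0) (by ring)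
  have hcomb : (1 - t) • x + t • (x + v) = x + t • v := by
    rw [smul_add]; module
  rw [hcomb] at hcv
  simp only [smul_eq_mul] at hcv
  have : E (x + t • v) - E x ≤ t * (E (x + v) - E x) := by
    have : (1 - t) * E x + t * E (x + v) = E x + t * (E (x + v) - E x) := by ring
    rw [this] at hcv
    linarith
  have hslope : slope (fun t : ℝ => E (x + t • v)) 0 t
      = (E (x + t • v) - E x) / t := by
    simp [slope_def_field]
  rw [hslope]
  rw [div_le_iff₀ ht0]
  linarith [this]

theorem uniform_smoothness_iff_modulus_bound
    {X : Type*} [NormedAddCommGroup X] [NormedSpace ℝ X] [CompleteSpace X]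
    (E : X → ℝ) (E' : X → X →L[ℝ] ℝ) (S : Set X)
    (hE : ConvexOn ℝ Set.univ E)
    (hdiff : ∀ x ∈ S, HasFDerivAt E (E' x) x)
    (q M : ℝ) (hq : 1 < q) (hq2 : q ≤ 2) (hM : 0 < M) :
    (∃ α : ℝ, 0 < α ∧ ∀ x ∈ S, ∀ x' : X, ‖x - x'‖ ≤ M →
        E x' - E x - E' x (x' - x) ≤ α * ‖x' - x‖ ^ q) ↔
    (∃ α₁ : ℝ, 0 < α₁ ∧ ∀ u : ℝ, 0 < u → u ≤ M → ∀ x ∈ S, ∀ y : X, ‖y‖ = 1 →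
        E (x + u • y) + E (x - u • y) - 2 * E x ≤ 2 * (α₁ * u ^ q)) := by
  constructor
  · rintro ⟨α, hα, h⟩
    refine ⟨α, hα, fun u hu huM x hx y hy => ?_⟩
    have hnorm : ‖u • y‖ = u := by
      rw [norm_smul, hy, Real.norm_eq_abs, abs_of_pos hu, mul_one]
    have h1 := h x hx (x + u • y) (by simpa [hnorm] using huM)
    have h2 := h x hx (x - u • y) (by
      simpa [norm_neg, hnorm, norm_sub_rev] using huM)
    simp only [add_sub_cancel_left, sub_sub_cancel_left, map_neg] at h1 h2
    rw [hnorm] at h1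
    rw [norm_neg, hnorm] at h2
    linarith
  · rintro ⟨α₁, hα₁, h⟩
    refine ⟨2 * α₁, by linarith, fun x hx x' hxx' => ?_⟩
    rcases eq_or_ne x' x with rfl | hne
    · simp [Real.zero_rpow (by linarith : q ≠ 0)]
    · set u := ‖x' - x‖ with hu
      have hu0 : 0 < u := by
        rw [hu]; exact norm_pos_iff.mpr (sub_ne_zero.mpr hne)
      set y := u⁻¹ • (x' - x) with hy
      have hyn : ‖y‖ = 1 := by
        rw [hy, norm_smul, norm_inv, Real.norm_eq_abs, abs_of_pos hu0, ← hu,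
          inv_mul_cancel₀ (ne_of_gt hu0)]
      have hxy : x + u • y = x' := by
        rw [hy, smul_smul, mul_inv_cancel₀ (ne_of_gt hu0), one_smul]; abel
      have hxy' : x - u • y = x + (x - x') := by
        rw [hy, smul_smul, mul_inv_cancel₀ (ne_of_gt hu0), one_smul]; abel
      have hmod := h u hu0 (by rw [hu, norm_sub_rev]; exact hxx') x hx y hyn
      rw [hxy, hxy'] at hmod
      have hsub := convex_subgradient_ineq E (E' x) x hE (hdiff x hx) (x - x')
      have hlin : (E' x) (x - x') = -(E' x) (x' - x) := by
        rw [← map_neg]; congr 1; abel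
      rw [hlin] at hsub
      calc E x' - E x - E' x (x' - x)
          ≤ E x' + E (x + (x - x')) - 2 * E x := by linarith
        _ ≤ 2 * (α₁ * u ^ q) := hmod
        _ = 2 * α₁ * u ^ q := by ring
end

section
/- Let ℓ > 0, r > 0, B > 0, and let {a_m}_{m≥1} and {r_m}_{m≥2} be sequences of non-negative reals satisfying a₁ ≤ B and a_{m+1} ≤ a_m (1 - (r_{m+1}/r) a_m^ℓ) for all m ≥ 1. Then for all m ≥ 2, a_m ≤ max{1, ℓ^{-1/ℓ}} · r^{1/ℓ} · (r B^{-ℓ} + Σ_{k=2}^m r_k)^{-1/ℓ}. -/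
open Real Finset

-- Bernoulli-type inequality: for 0 ≤ x < 1 and l > 0, 1 + l x ≤ (1-x)^(-l)
lemma bern_aux {l x : ℝ} (hl : 0 < l) (hx : 0 ≤ x) (hx1 : x < 1) :
    1 + l * x ≤ (1 - x) ^ (-l) := by
  have h1x : 0 < 1 - x := by linarith
  rcases le_or_gt 1 l with hl1 | hl1
  · -- l ≥ 1 : use (1+s)^l ≥ 1 + l s with s = x/(1-x) ≥ x
    set s := x / (1 - x) with hs
    have hs0 : 0 ≤ s := div_nonneg hx h1x.le
    have hsx : x ≤ s := by
      rw [hs, le_div_iff₀ h1x]; nlinarith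
    have hber := one_add_mul_self_le_rpow_one_add (by linarith : (-1:ℝ) ≤ s) hl1
    have h1s : 1 + s = (1 - x)⁻¹ := by
      rw [hs]; field_simp; ring
    have heq : (1 + s) ^ l = (1 - x) ^ (-l) := by
      rw [h1s, ← Real.rpow_neg_one (1 - x), ← Real.rpow_mul h1x.le]
      norm_num
    nlinarith [hber, heq]
  · -- l < 1 : (1-x)^l ≤ 1 - l x, then invert
    have hlx : l * x < 1 := by nlinarith
    have hber := rpow_one_add_le_one_add_mul_self (by linarith : (-1:ℝ) ≤ -x) hl.le hl1.le
    have h2 : (1 - x) ^ l ≤ 1 - l * x := by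
      have hgoal : (1:ℝ) + -x = 1 - x := by ring
      rw [hgoal] at hber; nlinarith [hber]
    have hpow_pos : 0 < (1 - x) ^ l := Real.rpow_pos_of_pos h1x l
    rw [Real.rpow_neg h1x.le, ← one_div, le_div_iff₀ hpow_pos]
    nlinarith [mul_le_mul_of_nonneg_left h2 (show (0:ℝ) ≤ 1 + l * x by positivity), sq_nonneg (l * x)]


-- one-step inequality for the inverse power
lemma step_aux {l c a y : ℝ} (hl : 0 < l) (hc : 0 ≤ c) (ha : 0 < a) (hy : 0 < y)
    (h : y ≤ a * (1 - c * a ^ l)) : a ^ (-l) + l * c ≤ y ^ (-l) := by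
  have hx0 : 0 ≤ c * a ^ l := mul_nonneg hc (Real.rpow_nonneg ha.le l)
  have hprod : 0 < a * (1 - c * a ^ l) := lt_of_lt_of_le hy h
  have h1 : 0 < 1 - c * a ^ l := by nlinarith [hprod, ha]
  have hxlt : c * a ^ l < 1 := by linarith
  have hb := bern_aux hl hx0 hxlt
  have h3 : (a * (1 - c * a ^ l)) ^ (-l) ≤ y ^ (-l) :=
    Real.rpow_le_rpow_of_nonpos hy h (by linarith)
  have h4 : (a * (1 - c * a ^ l)) ^ (-l) = a ^ (-l) * (1 - c * a ^ l) ^ (-l) :=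
    Real.mul_rpow ha.le h1.le
  have h5 : a ^ (-l) * (1 + l * (c * a ^ l)) ≤ a ^ (-l) * (1 - c * a ^ l) ^ (-l) :=
    mul_le_mul_of_nonneg_left hb (Real.rpow_nonneg ha.le _)
  have h6 : a ^ (-l) * a ^ l = 1 := by
    rw [← Real.rpow_add ha]; norm_num
  have h7 : l * c * (a ^ (-l) * a ^ l) = l * c := by rw [h6]; ring
  nlinarith [h3, h4, h5, h7]

lemma main_ind (l r B : ℝ) (hl : 0 < l) (hr : 0 < r) (hB : 0 < B)
    (a : ℕ → ℝ) (rs : ℕ → ℝ)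
    (ha_nonneg : ∀ m, 1 ≤ m → 0 ≤ a m)
    (hrs_nonneg : ∀ m, 2 ≤ m → 0 ≤ rs m)
    (ha1 : a 1 ≤ B)
    (hrec : ∀ m, 1 ≤ m → a (m + 1) ≤ a m * (1 - (rs (m + 1) / r) * a m ^ l)) :
    ∀ m, 1 ≤ m → a m = 0 ∨
      (0 < a m ∧ B ^ (-l) + (l / r) * ∑ k ∈ Finset.Icc 2 m, rs k ≤ a m ^ (-l)) := by
  intro m hm
  induction m, hm using Nat.le_induction with
  | base =>
    rcases (ha_nonneg 1 le_rfl).eq_or_lt with h0 | hpos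
    · exact Or.inl h0.symm
    · refine Or.inr ⟨hpos, ?_⟩
      have : Finset.Icc 2 1 = ∅ := by decide
      rw [this, Finset.sum_empty, mul_zero, add_zero]
      exact Real.rpow_le_rpow_of_nonpos hpos ha1 (by linarith)
  | succ m hm ih =>
    rcases (ha_nonneg (m + 1) (by omega)).eq_or_lt with h0 | hpos
    · exact Or.inl h0.symm
    · refine Or.inr ⟨hpos, ?_⟩
      rcases ih with h0 | ⟨hapos, hbound⟩
      · exfalso
        have := hrec m hm
        rw [h0] at this
        simp at this
        linarith
      · have hc : 0 ≤ rs (m + 1) / r := div_nonneg (hrs_nonneg (m + 1) (by omega)) hr.le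
        have hstep := step_aux hl hc hapos hpos (hrec m hm)
        have hsum : ∑ k ∈ Finset.Icc 2 (m + 1), rs k
            = (∑ k ∈ Finset.Icc 2 m, rs k) + rs (m + 1) :=
          Finset.sum_Icc_succ_top (by omega) rs
        rw [hsum]
        have : (l / r) * ((∑ k ∈ Finset.Icc 2 m, rs k) + rs (m + 1))
            = (l / r) * (∑ k ∈ Finset.Icc 2 m, rs k) + l * (rs (m + 1) / r) := by ring
        rw [this]
        linarith

theorem recursive_sequence_decay
    (l r B : ℝ) (hl : 0 < l) (hr : 0 < r) (hB : 0 < B)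
    (a : ℕ → ℝ) (rs : ℕ → ℝ)
    (ha_nonneg : ∀ m, 1 ≤ m → 0 ≤ a m)
    (hrs_nonneg : ∀ m, 2 ≤ m → 0 ≤ rs m)
    (ha1 : a 1 ≤ B)
    (hrec : ∀ m, 1 ≤ m → a (m + 1) ≤ a m * (1 - (rs (m + 1) / r) * a m ^ l)) :
    ∀ m, 2 ≤ m →
      a m ≤ max 1 (l ^ (-(1 / l))) * r ^ (1 / l) *
        (r * B ^ (-l) + ∑ k ∈ Finset.Icc 2 m, rs k) ^ (-(1 / l)) := by
  intro m hm
  set S := ∑ k ∈ Finset.Icc 2 m, rs k with hS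
  have hS0 : 0 ≤ S := Finset.sum_nonneg fun k hk => hrs_nonneg k (Finset.mem_Icc.mp hk).1
  set X := r * B ^ (-l) + S with hX
  have hBl : 0 < B ^ (-l) := Real.rpow_pos_of_pos hB _
  have hXpos : 0 < X := by positivity
  have hXr : 0 < X ^ (-(1 / l)) := Real.rpow_pos_of_pos hXpos _
  have hrl : 0 < r ^ (1 / l) := Real.rpow_pos_of_pos hr _
  have hmax : (0:ℝ) < max 1 (l ^ (-(1 / l))) := lt_of_lt_of_le zero_lt_one (le_max_left _ _)
  rcases main_ind l r B hl hr hB a rs ha_nonneg hrs_nonneg ha1 hrec m (by omega) with h0 | ⟨hpos, hbound⟩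
  · rw [h0]; positivity
  · set T := min 1 l with hT
    have hT0 : 0 < T := lt_min zero_lt_one hl
    have hT1 : T ≤ 1 := min_le_left _ _
    have hTl : T ≤ l := min_le_right _ _
    set D := T * X * r⁻¹ with hD
    have hDpos : 0 < D := by positivity
    have hkey : D ≤ B ^ (-l) + (l / r) * S := by
      rw [hD, hX]
      have h1 : T * (r * B ^ (-l)) * r⁻¹ = T * B ^ (-l) := by field_simp
      have h2 : T * B ^ (-l) ≤ B ^ (-l) := by nlinarith
      have h3 : T * S * r⁻¹ ≤ l * S * r⁻¹ := by
        have : 0 ≤ S * r⁻¹ := by positivity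
        nlinarith
      have h4 : l * S * r⁻¹ = (l / r) * S := by field_simp
      nlinarith [h1, h2, h3, h4]
    have hle : D ≤ a m ^ (-l) := le_trans hkey hbound
    have ham : a m ≤ D ^ (-(1 / l)) := by
      have hid : (a m ^ (-l)) ^ (-(1 / l)) = a m := by
        rw [← Real.rpow_mul hpos.le]
        rw [show (-l) * (-(1 / l)) = 1 by field_simp]
        exact Real.rpow_one _
      calc a m = (a m ^ (-l)) ^ (-(1 / l)) := hid.symm
        _ ≤ D ^ (-(1 / l)) := Real.rpow_le_rpow_of_nonpos hDpos hle (neg_nonpos.mpr (by positivity))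
    have hsplit : D ^ (-(1 / l)) = T ^ (-(1 / l)) * X ^ (-(1 / l)) * r ^ (1 / l) := by
      rw [hD, Real.mul_rpow (by positivity) (by positivity),
          Real.mul_rpow hT0.le hXpos.le, Real.inv_rpow hr.le,
          Real.rpow_neg hr.le, inv_inv]
    have hTle : T ^ (-(1 / l)) ≤ max 1 (l ^ (-(1 / l))) := by
      rcases le_total l 1 with h | h
      · rw [hT, min_eq_right h]; exact le_max_right _ _
      · rw [hT, min_eq_left h, Real.one_rpow]; exact le_max_left _ _
    calc a m ≤ D ^ (-(1 / l)) := ham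
      _ = T ^ (-(1 / l)) * X ^ (-(1 / l)) * r ^ (1 / l) := hsplit
      _ ≤ max 1 (l ^ (-(1 / l))) * X ^ (-(1 / l)) * r ^ (1 / l) := by
          have := mul_le_mul_of_nonneg_right (mul_le_mul_of_nonneg_right hTle hXr.le) hrl.le
          linarith
      _ = max 1 (l ^ (-(1 / l))) * r ^ (1 / l) * X ^ (-(1 / l)) := by ring
end

section
/- Special case of the recursion lemma with constant weights: let ℓ > 0, r > 0, B > 0, c ∈ (0,1], and let {a_m} be a non-negative sequence with a₁ ≤ B and a_{m+1} ≤ a_m (1 - (c/r) a_m^ℓ) for all m ≥ 1. Then a_m ≤ max{1, ℓ^{-1/ℓ}} r^{1/ℓ} (r B^{-ℓ} + c(m-1))^{-1/ℓ} for m ≥ 2; in particular a_m = O(m^{-1/ℓ}). -/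
theorem recursive_sequence_decay_const
    (l r B c : ℝ) (hl : 0 < l) (hr : 0 < r) (hB : 0 < B)
    (hc0 : 0 < c) (hc1 : c ≤ 1)
    (a : ℕ → ℝ)
    (ha_nonneg : ∀ m, 1 ≤ m → 0 ≤ a m)
    (ha1 : a 1 ≤ B)
    (hrec : ∀ m, 1 ≤ m → a (m + 1) ≤ a m * (1 - (c / r) * a m ^ l)) :
    ∀ m, 2 ≤ m →
      a m ≤ max 1 (l ^ (-(1 / l))) * r ^ (1 / l) *
        (r * B ^ (-l) + c * ((m : ℝ) - 1)) ^ (-(1 / l)) := by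
  have hBl : (0:ℝ) < B ^ l := Real.rpow_pos_of_pos hB l
  have hBnl : B ^ (-l) = (B ^ l)⁻¹ := Real.rpow_neg hB.le l
  -- Key inequality by induction
  have key : ∀ m, 1 ≤ m → a m ^ l * (B ^ (-l) + ((m:ℝ) - 1) * (l * c / r)) ≤ 1 := by
    intro m hm
    induction m with
    | zero => omega
    | succ n ih =>
      rcases Nat.lt_or_ge n 1 with h1 | h1
      · interval_cases n
        norm_num
        have h2 : a 1 ^ l ≤ B ^ l :=
          Real.rpow_le_rpow (ha_nonneg 1 le_rfl) ha1 hl.le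
        rw [hBnl]
        calc a 1 ^ l * (B ^ l)⁻¹ ≤ B ^ l * (B ^ l)⁻¹ :=
              mul_le_mul_of_nonneg_right h2 (by positivity)
          _ = 1 := mul_inv_cancel₀ hBl.ne'
      · have ihn := ih h1
        have hA : 0 ≤ a n := ha_nonneg n h1
        have hA' : 0 ≤ a (n + 1) := ha_nonneg (n + 1) (by omega)
        have hrecn := hrec n h1
        set P := a n ^ l with hP
        have hPnn : 0 ≤ P := Real.rpow_nonneg hA l
        set x := (c / r) * P with hx
        have hxnn : 0 ≤ x := by positivity
        set g := B ^ (-l) + ((n:ℝ) - 1) * (l * c / r) with hgdef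
        have hbr : B ^ (-l) + ((((n+1 : ℕ)) : ℝ) - 1) * (l * c / r) = g + l * c / r := by
          rw [hgdef]; push_cast; ring
        rw [hbr]
        have hg : (0:ℝ) ≤ g := by
          have hn1 : (1:ℝ) ≤ (n:ℝ) := by exact_mod_cast h1
          have h0 : (0:ℝ) ≤ ((n:ℝ) - 1) * (l * c / r) :=
            mul_nonneg (by linarith) (by positivity)
          have hB' : (0:ℝ) ≤ B ^ (-l) := Real.rpow_nonneg hB.le _
          rw [hgdef]; linarith
        rcases le_or_gt (a n * (1 - x)) 0 with hz | hpos
        · have hA0 : a (n + 1) = 0 := le_antisymm (le_trans hrecn hz) hA'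
          rw [hA0, Real.zero_rpow hl.ne', zero_mul]
          norm_num
        · have hAn : 0 < a n := by
            rcases hA.lt_or_eq with h | h
            · exact h
            · rw [← h, zero_mul] at hpos; exact absurd hpos (lt_irrefl 0)
          have htx : 0 < 1 - x := by
            by_contra h
            push_neg at h
            nlinarith
          have hE : (1 - x) ^ l * (1 + l * x) ≤ 1 := by
            have h1x : (1 - x) ≤ Real.exp (-x) := by
              have := Real.add_one_le_exp (-x); linarith
            have h2 : (1 - x) ^ l ≤ Real.exp (-x) ^ l :=
              Real.rpow_le_rpow htx.le h1x hl.le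
            have h3 : Real.exp (-x) ^ l = Real.exp (-x * l) := (Real.exp_mul _ _).symm
            have h4 : 1 + l * x ≤ Real.exp (x * l) := by
              have := Real.add_one_le_exp (x * l); linarith
            calc (1 - x) ^ l * (1 + l * x)
                ≤ Real.exp (-x) ^ l * Real.exp (x * l) :=
                  mul_le_mul h2 h4 (by positivity)
                    (Real.rpow_nonneg (Real.exp_pos _).le _)
              _ = Real.exp (-x * l) * Real.exp (x * l) := by rw [h3]
              _ = 1 := by rw [← Real.exp_add]; ring_nf; exact Real.exp_zero
          set T := (1 - x) ^ l with hT
          have hTnn : 0 ≤ T := Real.rpow_nonneg htx.le _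
          have hQ : a (n + 1) ^ l ≤ P * T := by
            calc a (n + 1) ^ l ≤ (a n * (1 - x)) ^ l :=
                  Real.rpow_le_rpow hA' hrecn hl.le
              _ = P * T := Real.mul_rpow hA htx.le
          have hgoal2 : P * T * (g + l * c / r) ≤ 1 := by
            have hpos1 : (0:ℝ) < 1 + l * x := by positivity
            have step2 : (P * (g + l * c / r)) * (T * (1 + l * x))
                ≤ (P * (g + l * c / r)) * 1 :=
              mul_le_mul_of_nonneg_left hE (mul_nonneg hPnn (by positivity))
            have step3 : P * (g + l * c / r) ≤ 1 + l * x := by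
              calc P * (g + l * c / r) = P * g + l * x := by rw [hx]; ring
                _ ≤ 1 + l * x := by linarith
            have step4 : P * T * (g + l * c / r) * (1 + l * x) ≤ 1 * (1 + l * x) := by
              calc P * T * (g + l * c / r) * (1 + l * x)
                  = (P * (g + l * c / r)) * (T * (1 + l * x)) := by ring
                _ ≤ (P * (g + l * c / r)) * 1 := step2
                _ ≤ 1 * (1 + l * x) := by linarith
            exact le_of_mul_le_mul_right (by linarith) hpos1
          calc a (n + 1) ^ l * (g + l * c / r) ≤ P * T * (g + l * c / r) :=
                mul_le_mul_of_nonneg_right hQ (by positivity)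
            _ ≤ 1 := hgoal2
  -- conclude
  intro m hm
  have hm1 : 1 ≤ m := by omega
  have hmR : (2:ℝ) ≤ (m:ℝ) := by exact_mod_cast hm
  have hkey := key m hm1
  set g := B ^ (-l) + ((m:ℝ) - 1) * (l * c / r) with hgdef
  have hB' : (0:ℝ) < B ^ (-l) := Real.rpow_pos_of_pos hB _
  have hgpos : 0 < g := by
    have h0 : (0:ℝ) ≤ ((m:ℝ) - 1) * (l * c / r) :=
      mul_nonneg (by linarith) (by positivity)
    rw [hgdef]; linarith
  have ham : 0 ≤ a m := ha_nonneg m hm1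
  have h1 : a m ≤ g ^ (-(1 / l)) := by
    have h2 : a m ^ l ≤ g⁻¹ := by
      rw [← one_div, le_div_iff₀ hgpos]
      exact hkey
    have h3 : a m = (a m ^ l) ^ l⁻¹ := (Real.rpow_rpow_inv ham hl.ne').symm
    rw [h3]
    calc (a m ^ l) ^ l⁻¹ ≤ (g⁻¹) ^ l⁻¹ :=
        Real.rpow_le_rpow (Real.rpow_nonneg ham l) h2 (by positivity)
      _ = g ^ (-(1 / l)) := by
        rw [Real.inv_rpow hgpos.le, ← Real.rpow_neg hgpos.le, one_div]
  set K := r * B ^ (-l) + c * ((m:ℝ) - 1) with hKdef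
  have hKpos : (0:ℝ) < K := by
    have : (0:ℝ) ≤ c * ((m:ℝ) - 1) := mul_nonneg hc0.le (by linarith)
    rw [hKdef]; nlinarith
  set H := r * B ^ (-l) + l * c * ((m:ℝ) - 1) with hHdef
  have hHpos : (0:ℝ) < H := by
    have : (0:ℝ) ≤ l * c * ((m:ℝ) - 1) := mul_nonneg (by positivity) (by linarith)
    rw [hHdef]; nlinarith
  have hgK : g = H / r := by
    rw [hgdef, hHdef]; field_simp
  have hsplit : g ^ (-(1 / l)) = r ^ (1 / l) * H ^ (-(1 / l)) := by
    rw [hgK, Real.div_rpow hHpos.le hr.le, Real.rpow_neg hr.le, div_eq_mul_inv, inv_inv, mul_comm]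
  have hKe : (0:ℝ) ≤ K ^ (-(1 / l)) := Real.rpow_nonneg hKpos.le _
  have hfinal : H ^ (-(1 / l)) ≤ max 1 (l ^ (-(1 / l))) * K ^ (-(1 / l)) := by
    rcases le_total 1 l with hl1 | hl1
    · have hKH : K ≤ H := by
        have hcm : (0:ℝ) ≤ c * ((m:ℝ) - 1) := mul_nonneg hc0.le (by linarith)
        rw [hKdef, hHdef]
        nlinarith
      have hHe : H ^ (-(1 / l)) ≤ K ^ (-(1 / l)) :=
        Real.rpow_le_rpow_of_nonpos hKpos hKH (neg_nonpos.mpr (by positivity))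
      exact hHe.trans (le_mul_of_one_le_left hKe (le_max_left _ _))
    · have hlK : l * K ≤ H := by
        have hq : l * (r * B ^ (-l)) ≤ r * B ^ (-l) :=
          mul_le_of_le_one_left (mul_nonneg hr.le hB'.le) hl1
        calc l * K = l * (r * B ^ (-l)) + l * c * ((m:ℝ) - 1) := by rw [hKdef]; ring
          _ ≤ r * B ^ (-l) + l * c * ((m:ℝ) - 1) := by linarith
          _ = H := hHdef.symm
      have hstep : H ^ (-(1 / l)) ≤ (l * K) ^ (-(1 / l)) :=
        Real.rpow_le_rpow_of_nonpos (by positivity) hlK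
          (neg_nonpos.mpr (by positivity))
      have hmul : (l * K) ^ (-(1 / l)) = l ^ (-(1 / l)) * K ^ (-(1 / l)) :=
        Real.mul_rpow hl.le hKpos.le
      calc H ^ (-(1 / l)) ≤ l ^ (-(1 / l)) * K ^ (-(1 / l)) := by rw [← hmul]; exact hstep
        _ ≤ max 1 (l ^ (-(1 / l))) * K ^ (-(1 / l)) :=
          mul_le_mul_of_nonneg_right (le_max_right _ _) hKe
  calc a m ≤ g ^ (-(1 / l)) := h1
    _ = r ^ (1 / l) * H ^ (-(1 / l)) := hsplit
    _ ≤ r ^ (1 / l) * (max 1 (l ^ (-(1 / l))) * K ^ (-(1 / l))) :=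
        mul_le_mul_of_nonneg_left hfinal (by positivity)
    _ = max 1 (l ^ (-(1 / l))) * r ^ (1 / l) * K ^ (-(1 / l)) := by ring
end

section
/- One-step decrease estimate: let E satisfy the uniform smoothness condition with constants α > 0, M > 0, 1 < q ≤ 2 on Ω = {x : E(x) ≤ E(0)}, let μ > max{1, α^{-1} M₀ M^{1-q}} where ‖E'(x)‖ ≤ M₀ on Ω, let x ∈ Ω, φ ∈ X with ‖φ‖ ≤ 1, and set λ := sgn(⟨E'(x), φ⟩) (αμ)^{-1/(q-1)} |⟨E'(x), φ⟩|^{1/(q-1)}. Then E(x - λφ) ≤ E(x) - ((μ-1)/μ) (αμ)^{-1/(q-1)} |⟨E'(x), φ⟩|^{q/(q-1)}. -/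
theorem rpga_one_step_decrease
    {X : Type*} [NormedAddCommGroup X] [NormedSpace ℝ X] [CompleteSpace X]
    (E : X → ℝ) (E' : X → X →L[ℝ] ℝ)
    (α M M₀ μ q : ℝ)
    (hα : 0 < α) (hM : 0 < M) (hM₀ : 0 < M₀) (hq : 1 < q) (hq2 : q ≤ 2)
    (hμ : μ > max 1 (α⁻¹ * M₀ * M ^ (1 - q)))
    (hconv : ConvexOn ℝ Set.univ E)
    (hdiff : ∀ z : X, E z ≤ E 0 → HasFDerivAt E (E' z) z)
    (hbound : ∀ z : X, E z ≤ E 0 → ‖E' z‖ ≤ M₀)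
    (hUS : ∀ z : X, E z ≤ E 0 → ∀ z' : X, ‖z - z'‖ ≤ M →
      E z' - E z - E' z (z' - z) ≤ α * ‖z' - z‖ ^ q)
    (x φ : X) (hx : E x ≤ E 0) (hφ : ‖φ‖ ≤ 1)
    (lam : ℝ)
    (hlam : lam = Real.sign (E' x φ) * (α * μ) ^ (-(1 / (q - 1))) * |E' x φ| ^ (1 / (q - 1))) :
    E (x - lam • φ) ≤
      E x - ((μ - 1) / μ) * (α * μ) ^ (-(1 / (q - 1))) * |E' x φ| ^ (q / (q - 1)) := by
  have hq1 : 0 < q - 1 := by linarith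
  have hμ1 : (1:ℝ) < μ := lt_of_le_of_lt (le_max_left _ _) hμ
  have hμ0 : (0:ℝ) < μ := by linarith
  have hαμ : 0 < α * μ := by positivity
  set a := E' x φ with ha
  set p := 1 / (q - 1) with hp
  have hppos : 0 < p := by positivity
  set c := (α * μ) ^ (-p) with hc
  clear_value a p c
  have hcpos : 0 < c := by rw [hc]; exact Real.rpow_pos_of_pos hαμ _
  have hqpq : q / (q - 1) = p + 1 := by rw [hp]; field_simp; ring
  by_cases h0 : a = 0
  · have hlam0 : lam = 0 := by rw [hlam, h0, Real.sign_zero]; ring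
    have hA : |a| ^ (q / (q - 1)) = 0 := by
      rw [h0, abs_zero]
      exact Real.zero_rpow (by positivity)
    rw [hlam0, hA, zero_smul, sub_zero]
    simp
  · have hA : 0 < |a| := abs_pos.mpr h0
    have hAM : |a| ≤ M₀ := by
      have h1 : ‖a‖ ≤ ‖E' x‖ * ‖φ‖ := by rw [ha]; exact (E' x).le_opNorm φ
      have h2 : ‖E' x‖ ≤ M₀ := hbound x hx
      have h3 : ‖E' x‖ * ‖φ‖ ≤ M₀ * 1 :=
        mul_le_mul h2 hφ (norm_nonneg _) (le_trans (norm_nonneg _) h2)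
      rw [Real.norm_eq_abs] at h1
      linarith
    have hsabs : |Real.sign a| = 1 := by
      rcases lt_or_gt_of_ne h0 with h | h
      · rw [Real.sign_of_neg h]; norm_num
      · rw [Real.sign_of_pos h]; norm_num
    have hsa : Real.sign a * a = |a| := by
      rcases lt_or_gt_of_ne h0 with h | h
      · rw [Real.sign_of_neg h, abs_of_neg h]; ring
      · rw [Real.sign_of_pos h, abs_of_pos h]; ring
    have hlamabs : |lam| = c * |a| ^ p := by
      rw [hlam, abs_mul, abs_mul, hsabs,
        abs_of_pos hcpos, abs_of_nonneg (Real.rpow_nonneg (abs_nonneg a) p)]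
      ring
    -- bound on step length
    have hMq : M₀ / (α * μ) ≤ M ^ (q - 1) := by
      have hmax : α⁻¹ * M₀ * M ^ (1 - q) < μ := lt_of_le_of_lt (le_max_right _ _) hμ
      have hMq1 : M ^ ((1:ℝ) - q) = (M ^ (q - 1))⁻¹ := by
        rw [show (1:ℝ) - q = -(q - 1) by ring, Real.rpow_neg hM.le]
      have hMqpos : 0 < M ^ (q - 1) := Real.rpow_pos_of_pos hM _
      rw [hMq1] at hmax
      rw [div_le_iff₀ hαμ]
      have := mul_lt_mul_of_pos_right hmax hMqpos
      rw [inv_mul_cancel_right₀ (ne_of_gt hMqpos)] at this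
      calc M₀ = α * (α⁻¹ * M₀) := by field_simp
        _ ≤ α * (μ * M ^ (q - 1)) := by
            apply mul_le_mul_of_nonneg_left _ hα.le
            nlinarith
        _ = M ^ (q - 1) * (α * μ) := by ring
    have hstepbound : c * |a| ^ p ≤ M := by
      have h1 : |a| ^ p ≤ M₀ ^ p := Real.rpow_le_rpow (abs_nonneg a) hAM hppos.le
      have h2 : c * M₀ ^ p = (M₀ / (α * μ)) ^ p := by
        rw [Real.div_rpow hM₀.le hαμ.le, hc, Real.rpow_neg hαμ.le]
        ring
      have h3 : (M₀ / (α * μ)) ^ p ≤ (M ^ (q - 1)) ^ p :=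
        Real.rpow_le_rpow (by positivity) hMq hppos.le
      have h4 : (M ^ (q - 1)) ^ p = M := by
        rw [← Real.rpow_mul hM.le]
        rw [show (q - 1) * p = 1 by rw [hp]; field_simp, Real.rpow_one]
      calc c * |a| ^ p ≤ c * M₀ ^ p := mul_le_mul_of_nonneg_left h1 hcpos.le
        _ = (M₀ / (α * μ)) ^ p := h2
        _ ≤ (M ^ (q - 1)) ^ p := h3
        _ = M := h4
    have hnlam : ‖lam • φ‖ ≤ c * |a| ^ p := by
      rw [norm_smul, Real.norm_eq_abs, hlamabs]
      have h5 := mul_le_mul_of_nonneg_left hφ (mul_nonneg hcpos.le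
        (Real.rpow_nonneg (abs_nonneg a) p))
      linarith
    have hstep : ‖x - (x - lam • φ)‖ ≤ M := by
      rw [sub_sub_cancel]
      exact le_trans hnlam hstepbound
    have hus := hUS x hx (x - lam • φ) hstep
    have hdiff1 : x - lam • φ - x = -(lam • φ) := by abel
    rw [hdiff1] at hus
    have hEval : E' x (-(lam • φ)) = -(lam * a) := by
      rw [map_neg, map_smul]; simp [ha, smul_eq_mul]
    rw [hEval] at hus
    have hexp : |a| ^ (p + 1) = |a| ^ p * |a| := Real.rpow_add_one (abs_ne_zero.mpr h0) p
    have hlama : lam * a = c * |a| ^ (p + 1) := by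
      rw [hlam, hexp]
      calc Real.sign a * c * |a| ^ p * a = c * |a| ^ p * (Real.sign a * a) := by ring
        _ = c * (|a| ^ p * |a|) := by rw [hsa]; ring
    have hpq : p * q = p + 1 := by
      rw [hp]; field_simp; ring
    have hcq : α * c ^ q = (1 / μ) * c := by
      rw [hc, ← Real.rpow_mul hαμ.le]
      have : -p * q = -p + (-1) := by rw [neg_mul, hpq]; ring
      rw [this, Real.rpow_add hαμ, Real.rpow_neg_one]
      field_simp
    have hnormq : α * ‖-(lam • φ)‖ ^ q ≤ (1 / μ) * c * |a| ^ (p + 1) := by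
      have h1 : ‖-(lam • φ)‖ ≤ c * |a| ^ p := by rwa [norm_neg]
      have h2 : ‖-(lam • φ)‖ ^ q ≤ (c * |a| ^ p) ^ q :=
        Real.rpow_le_rpow (norm_nonneg _) h1 (by linarith)
      have h3 : (c * |a| ^ p) ^ q = c ^ q * |a| ^ (p + 1) := by
        rw [Real.mul_rpow hcpos.le (Real.rpow_nonneg (abs_nonneg a) p),
          ← Real.rpow_mul (abs_nonneg a), hpq]
      calc α * ‖-(lam • φ)‖ ^ q ≤ α * (c ^ q * |a| ^ (p + 1)) := by
            rw [← h3]; exact mul_le_mul_of_nonneg_left h2 hα.le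
        _ = (α * c ^ q) * |a| ^ (p + 1) := by ring
        _ = (1 / μ) * c * |a| ^ (p + 1) := by rw [hcq]
    rw [hqpq]
    have hfinal : ((μ - 1) / μ) * c * |a| ^ (p + 1) =
        c * |a| ^ (p + 1) - (1 / μ) * c * |a| ^ (p + 1) := by
      field_simp
    linarith
end

section
/- Error lower bound for the chosen direction: under the assumptions of the duality bound, if additionally E is convex, x̄ is a global minimizer of E, and e := E(x) - E(x̄) ≥ 0, then e ≤ |⟨E'(x), φ*⟩| · ‖x̄‖₁, i.e., ‖x̄‖₁^{-1} e ≤ |⟨E'(x), φ*⟩|. -/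
/-- The dictionary semi-norm `‖xb‖₁`: infimum of ℓ¹ norms of coefficients over
all representations of `xb` as linear combinations of dictionary elements. -/
noncomputable def dictNorm1 {X : Type*} [NormedAddCommGroup X] [NormedSpace ℝ X]
    (D : Set X) (xb : X) : ℝ :=
  sInf {s : ℝ | ∃ (c : ℕ → ℝ) (g : ℕ → X), (∀ n, g n ∈ D) ∧
    Summable (fun n => |c n|) ∧ HasSum (fun n => c n • g n) xb ∧ s = ∑' n, |c n|}

/-- Gradient inequality for convex functions: `E' x (y - x) ≤ E y - E x`. -/
lemma convex_grad_ineq {X : Type*} [NormedAddCommGroup X] [NormedSpace ℝ X]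
    (E : X → ℝ) (L : X →L[ℝ] ℝ) (hconv : ConvexOn ℝ Set.univ E)
    (x y : X) (hdiff : HasFDerivAt E L x) :
    L (y - x) ≤ E y - E x := by
  set v := y - x with hv
  have hline : HasDerivAt (fun t : ℝ => E (x + t • v)) (L v) 0 := by
    have hg : HasDerivAt (fun t : ℝ => x + t • v) v 0 := by
      simpa using ((hasDerivAt_id (0 : ℝ)).smul_const v).const_add x
    have hdiff' : HasFDerivAt E L (x + (0:ℝ) • v) := by simpa using hdiff
    exact hdiff'.comp_hasDerivAt 0 hg
  have htend : Filter.Tendsto (slope (fun t : ℝ => E (x + t • v)) 0)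
      (nhdsWithin 0 (Set.Ioi 0)) (nhds (L v)) :=
    (hasDerivAt_iff_tendsto_slope.mp hline).mono_left
      (nhdsWithin_mono 0 (fun t ht => ne_of_gt ht))
  have hbound : ∀ᶠ t in nhdsWithin (0:ℝ) (Set.Ioi 0),
      slope (fun t : ℝ => E (x + t • v)) 0 t ≤ E y - E x := by
    filter_upwards [Ioo_mem_nhdsGT_of_mem (by norm_num : (0:ℝ) ∈ Set.Ico 0 1)] with t ht
    obtain ⟨ht0, ht1⟩ := ht
    have hcx : E (x + t • v) ≤ (1 - t) * E x + t * E y := by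
      have heq : x + t • v = (1 - t) • x + t • y := by
        rw [hv]; module
      rw [heq]
      exact hconv.2 (Set.mem_univ x) (Set.mem_univ y) (by linarith) (le_of_lt ht0)
        (by ring)
    rw [slope_def_field]
    simp only [zero_smul, add_zero, sub_zero]
    rw [div_le_iff₀ ht0]
    nlinarith [hcx]
  exact le_of_tendsto htend hbound

theorem greedy_error_lower_bound
    {X : Type*} [NormedAddCommGroup X] [NormedSpace ℝ X] [CompleteSpace X]
    (E : X → ℝ) (E' : X → X →L[ℝ] ℝ) (D : Set X)
    (hD : ∀ f ∈ D, ‖f‖ = 1)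
    (hdense : Dense (Submodule.span ℝ D : Set X))
    (hconv : ConvexOn ℝ Set.univ E)
    (x : X) (hdiff : HasFDerivAt E (E' x) x)
    (horth : E' x x = 0)
    (xb : X) (hmin : ∀ z : X, E xb ≤ E z)
    (hrep : {s : ℝ | ∃ (c : ℕ → ℝ) (g : ℕ → X), (∀ n, g n ∈ D) ∧
      Summable (fun n => |c n|) ∧ HasSum (fun n => c n • g n) xb ∧ s = ∑' n, |c n|}.Nonempty)
    (φstar : X) (hφstar : φstar ∈ D)
    (hmax : ∀ φ ∈ D, |E' x φ| ≤ |E' x φstar|) :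
    E x - E xb ≤ |E' x φstar| * dictNorm1 D xb := by
  set M := |E' x φstar| with hM
  have hM0 : 0 ≤ M := abs_nonneg _
  set S := {s : ℝ | ∃ (c : ℕ → ℝ) (g : ℕ → X), (∀ n, g n ∈ D) ∧
      Summable (fun n => |c n|) ∧ HasSum (fun n => c n • g n) xb ∧ s = ∑' n, |c n|} with hS
  -- main inequality for each representation
  have key : ∀ s ∈ S, E x - E xb ≤ M * s := by
    rintro s ⟨c, g, hg, hsum, hxb, rfl⟩
    -- gradient inequality
    have hgrad : E' x (xb - x) ≤ E xb - E x := convex_grad_ineq E (E' x) hconv x xb hdiff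
    have h1 : E x - E xb ≤ -(E' x xb) := by
      have : E' x (xb - x) = E' x xb - E' x x := by rw [map_sub]
      rw [this, horth, sub_zero] at hgrad; linarith
    have h2 : E x - E xb ≤ |E' x xb| := h1.trans (neg_le_abs _)
    -- bound |E' x xb| by M * ∑' |c n|
    have hsE : HasSum (fun n => E' x (c n • g n)) (E' x xb) := (E' x).hasSum hxb
    have hub : ∀ n, |E' x (c n • g n)| ≤ |c n| * M := by
      intro n
      rw [map_smul, smul_eq_mul, abs_mul]
      exact mul_le_mul_of_nonneg_left (hmax _ (hg n)) (abs_nonneg _)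
    have hsummb : Summable (fun n => |c n| * M) := hsum.mul_right M
    have hsumm : Summable (fun n => |E' x (c n • g n)|) :=
      Summable.of_nonneg_of_le (fun n => abs_nonneg _) hub hsummb
    have h3 : |E' x xb| ≤ ∑' n, |E' x (c n • g n)| := by
      rw [← hsE.tsum_eq]
      have := norm_tsum_le_tsum_norm (f := fun n => E' x (c n • g n))
        (by simp only [Real.norm_eq_abs]; exact hsumm)
      simp only [Real.norm_eq_abs] at this
      exact this
    have h4 : ∑' n, |E' x (c n • g n)| ≤ ∑' n, |c n| * M :=
      Summable.tsum_le_tsum hub hsumm hsummb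
    have h5 : ∑' n, |c n| * M = (∑' n, |c n|) * M := tsum_mul_right
    calc E x - E xb ≤ |E' x xb| := h2
      _ ≤ ∑' n, |c n| * M := h3.trans h4
      _ = M * ∑' n, |c n| := by rw [h5, mul_comm]
  have hbdd : BddBelow S := by
    refine ⟨0, fun s hs => ?_⟩
    obtain ⟨c, g, _, _, _, rfl⟩ := hs
    exact tsum_nonneg (fun n => abs_nonneg _)
  rcases eq_or_lt_of_le hM0 with h0 | hMpos
  · obtain ⟨s, hs⟩ := hrep
    have := key s hs
    rw [← h0] at this ⊢
    simpa using this
  · have : (E x - E xb) / M ≤ sInf S := by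
      apply le_csInf hrep
      intro s hs
      rw [div_le_iff₀ hMpos]
      rw [mul_comm]
      exact key s hs
    have := mul_le_mul_of_nonneg_left this hM0
    rw [mul_div_cancel₀ _ (ne_of_gt hMpos)] at this
    exact this
end

section
/- Error recursion for RPGA(co): let {x_k} be the iterates of the Rescaled Pure Greedy Algorithm for convex optimization with parameter μ > max{1, α^{-1}M₀M^{1-q}} applied to E and dictionary D, and let e_k := E(x_k) - E(x̄). Then for all k ≥ 2, e_k ≤ e_{k-1} (1 - ((μ-1)/μ)(αμ)^{-1/(q-1)} ‖x̄‖₁^{-q/(q-1)} e_{k-1}^{1/(q-1)}). -/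
private lemma sign_mul_self_eq_abs (a : ℝ) : Real.sign a * a = |a| := by
  rcases lt_trichotomy a 0 with h | h | h
  · rw [Real.sign_of_neg h, abs_of_neg h]; ring
  · simp [h]
  · rw [Real.sign_of_pos h, abs_of_pos h]; ring

private lemma convex_grad_le {X : Type*} [NormedAddCommGroup X] [NormedSpace ℝ X]
    {E : X → ℝ} (hconv : ConvexOn ℝ Set.univ E) {u : X} {f : X →L[ℝ] ℝ}
    (hd : HasFDerivAt E f u) (y : X) : f (y - u) ≤ E y - E u := by
  have hgc : ConvexOn ℝ Set.univ (fun s : ℝ => E (s • (y - u) + u)) := by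
    have h := hconv.comp_affineMap (AffineMap.lineMap u y)
    have heq : (E ∘ (AffineMap.lineMap u y : ℝ →ᵃ[ℝ] X)) = fun s : ℝ => E (s • (y - u) + u) := by
      funext s
      simp [AffineMap.lineMap_apply, vsub_eq_sub, vadd_eq_add]
    rw [heq] at h
    simpa using h
  have h1 : HasDerivAt (fun s : ℝ => s • (y - u) + u) (y - u) 0 := by
    simpa using ((hasDerivAt_id (0:ℝ)).smul_const (y - u)).add_const u
  have hd' : HasFDerivAt E f ((fun s : ℝ => s • (y - u) + u) 0) := by
    simpa using hd
  have h2 : HasDerivAt (fun s : ℝ => E (s • (y - u) + u)) (f (y - u)) 0 :=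
    hd'.comp_hasDerivAt 0 h1
  have := hgc.le_slope_of_hasDerivAt (Set.mem_univ (0:ℝ)) (Set.mem_univ (1:ℝ)) one_pos h2
  rw [slope_def_field] at this
  simpa using this

theorem rpga_error_recursion
    {X : Type*} [NormedAddCommGroup X] [NormedSpace ℝ X] [CompleteSpace X]
    (E : X → ℝ) (E' : X → X →L[ℝ] ℝ) (D : Set X)
    (α M M₀ μ q : ℝ)
    (hα : 0 < α) (hM : 0 < M) (hM₀ : 0 < M₀) (hq : 1 < q) (hq2 : q ≤ 2)
    (hμ : μ > max 1 (α⁻¹ * M₀ * M ^ (1 - q)))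
    (hconv : ConvexOn ℝ Set.univ E)
    (hD : ∀ f ∈ D, ‖f‖ = 1)
    (hdense : Dense (Submodule.span ℝ D : Set X))
    (hΩbdd : Bornology.IsBounded {z : X | E z ≤ E 0})
    (hdiff : ∀ z : X, E z ≤ E 0 → HasFDerivAt E (E' z) z)
    (hbound : ∀ z : X, E z ≤ E 0 → ‖E' z‖ ≤ M₀)
    (hUS : ∀ z : X, E z ≤ E 0 → ∀ z' : X, ‖z - z'‖ ≤ M →
      E z' - E z - E' z (z' - z) ≤ α * ‖z' - z‖ ^ q)
    (xb : X) (hmin : ∀ z : X, E xb ≤ E z)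
    (hrep : {s : ℝ | ∃ (c : ℕ → ℝ) (g : ℕ → X), (∀ n, g n ∈ D) ∧
      Summable (fun n => |c n|) ∧ HasSum (fun n => c n • g n) xb ∧ s = ∑' n, |c n|}.Nonempty)
    -- the iterates of RPGA(co)
    (x : ℕ → X) (φ : ℕ → X) (lam t : ℕ → ℝ)
    (hx0 : x 0 = 0)
    (hφD : ∀ m, 1 ≤ m → φ m ∈ D)
    (hφmax : ∀ m, 1 ≤ m → ∀ g ∈ D, |E' (x (m - 1)) g| ≤ |E' (x (m - 1)) (φ m)|)
    (hlam : ∀ m, 1 ≤ m → lam m = Real.sign (E' (x (m - 1)) (φ m)) *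
      (α * μ) ^ (-(1 / (q - 1))) * |E' (x (m - 1)) (φ m)| ^ (1 / (q - 1)))
    (hxm : ∀ m, 1 ≤ m → x m = t m • (x (m - 1) - lam m • φ m))
    (hline : ∀ m, 1 ≤ m → ∀ s : ℝ, E (x m) ≤ E (s • (x (m - 1) - lam m • φ m))) :
    ∀ k, 2 ≤ k →
      E (x k) - E xb ≤ (E (x (k - 1)) - E xb) *
        (1 - ((μ - 1) / μ) * (α * μ) ^ (-(1 / (q - 1))) *
          (dictNorm1 D xb) ^ (-(q / (q - 1))) *
          (E (x (k - 1)) - E xb) ^ (1 / (q - 1))) := by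
  intro k hk
  have hq1 : 0 < q - 1 := by linarith
  set p : ℝ := 1 / (q - 1) with hp
  have hp0 : 0 < p := by positivity
  have hμ1 : 1 < μ := lt_of_le_of_lt (le_max_left _ _) hμ
  have hμ0 : 0 < μ := by linarith
  have hαμ : 0 < α * μ := by positivity
  set L : ℝ := (α * μ) ^ (-p) with hL
  have hL0 : 0 < L := Real.rpow_pos_of_pos hαμ _
  have hpq : p * q = 1 + p := by
    rw [hp]; field_simp; ring
  -- all iterates in Ω
  have hΩ : ∀ m, E (x m) ≤ E 0 := by
    intro m
    rcases Nat.eq_zero_or_pos m with h | h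
    · rw [h, hx0]
    · simpa using hline m h 0
  have hk1 : 1 ≤ k := by omega
  have hj1 : 1 ≤ k - 1 := by omega
  -- derivative vanishes at iterates
  have hderiv0 : ∀ m, 1 ≤ m → E' (x m) (x m) = 0 := by
    intro m hm
    set v := x (m - 1) - lam m • φ m with hv
    have hdE : HasFDerivAt E (E' (x m)) (x m) := hdiff _ (hΩ m)
    have h1 : HasDerivAt (fun s : ℝ => s • v) v (t m) := by
      simpa using (hasDerivAt_id (t m)).smul_const v
    have hdE' : HasFDerivAt E (E' (x m)) ((fun s : ℝ => s • v) (t m)) := by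
      rw [show (fun s : ℝ => s • v) (t m) = x m from (hxm m hm).symm]
      exact hdE
    have h2 : HasDerivAt (fun s : ℝ => E (s • v)) (E' (x m) v) (t m) :=
      hdE'.comp_hasDerivAt (t m) h1
    have hmin' : IsLocalMin (fun s : ℝ => E (s • v)) (t m) := by
      apply Filter.Eventually.of_forall
      intro s
      simp only
      rw [show t m • v = x m from (hxm m hm).symm]
      exact hline m hm s
    have hz : E' (x m) v = 0 := hmin'.hasDerivAt_eq_zero h2
    nth_rewrite 2 [hxm m hm]
    rw [map_smul, smul_eq_mul, hz, mul_zero]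
  -- notation
  set u := x (k - 1) with hu
  set a : ℝ := E' u (φ k) with ha
  have hφDk : φ k ∈ D := hφD k hk1
  have haM : |a| ≤ M₀ := by
    have h1 := (E' u).le_opNorm (φ k)
    rw [hD _ hφDk, mul_one, Real.norm_eq_abs] at h1
    exact h1.trans (hbound u (hΩ _))
  -- |lam k| = L * |a| ^ p
  have hlamk : lam k = Real.sign a * L * |a| ^ p := hlam k hk1
  have habs : |lam k| = L * |a| ^ p := by
    rw [hlamk, abs_mul, abs_mul, abs_of_pos hL0,
      abs_of_nonneg (Real.rpow_nonneg (abs_nonneg a) p)]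
    rcases eq_or_ne a 0 with h | h
    · simp [h, Real.zero_rpow (ne_of_gt hp0)]
    · rcases Real.sign_apply_eq_of_ne_zero a h with h' | h' <;> simp [h']
  -- |lam k| ≤ M
  have hMid : M ^ (1 - q) * M ^ (q - 1) = 1 := by
    rw [← Real.rpow_add hM]; norm_num
  have hμ2 : α⁻¹ * M₀ * M ^ (1 - q) < μ := lt_of_le_of_lt (le_max_right _ _) hμ
  have hkey : (α * μ)⁻¹ * M₀ ≤ M ^ (q - 1) := by
    rw [inv_mul_le_iff₀ hαμ]
    have hMq : 0 < M ^ (q - 1) := Real.rpow_pos_of_pos hM _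
    have e1 : M₀ * M ^ (1 - q) < α * μ := by
      have h := mul_lt_mul_of_pos_left hμ2 hα
      calc M₀ * M ^ (1 - q) = α * (α⁻¹ * M₀ * M ^ (1 - q)) := by
            field_simp
          _ < α * μ := h
    have e3 : 0 < (α * μ - M₀ * M ^ (1 - q)) * M ^ (q - 1) :=
      mul_pos (by linarith) hMq
    have e4 : M₀ * (M ^ (1 - q) * M ^ (q - 1)) = M₀ := by rw [hMid, mul_one]
    nlinarith [e3, e4]
  have hlamM : |lam k| ≤ M := by
    rw [habs]
    have h1 : L = ((α * μ)⁻¹) ^ p := by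
      rw [hL, Real.rpow_neg hαμ.le, ← Real.inv_rpow hαμ.le]
    have h2 : L * |a| ^ p ≤ ((α * μ)⁻¹ * M₀) ^ p := by
      rw [h1, Real.mul_rpow (by positivity : (0:ℝ) ≤ (α * μ)⁻¹) hM₀.le]
      exact mul_le_mul_of_nonneg_left
        (Real.rpow_le_rpow (abs_nonneg a) haM hp0.le) (by positivity)
    have h3 : ((α * μ)⁻¹ * M₀) ^ p ≤ (M ^ (q - 1)) ^ p :=
      Real.rpow_le_rpow (by positivity) hkey hp0.le
    have h4 : (M ^ (q - 1)) ^ p = M := by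
      rw [← Real.rpow_mul hM.le]
      rw [show (q - 1) * p = 1 by rw [hp]; field_simp]
      exact Real.rpow_one M
    linarith
  -- the US decrement step
  have hdecr : E (x k) ≤ E u - ((μ - 1) / μ) * L * |a| ^ (1 + p) := by
    set z' := u - lam k • φ k with hz'
    have hnorm : ‖u - z'‖ = |lam k| := by
      rw [hz', sub_sub_cancel, norm_smul, hD _ hφDk, mul_one, Real.norm_eq_abs]
    have hUSk := hUS u (hΩ _) z' (by rw [hnorm]; exact hlamM)
    have hsub : z' - u = -(lam k • φ k) := by rw [hz']; abel
    rw [hsub, map_neg, map_smul, smul_eq_mul, norm_neg, norm_smul, hD _ hφDk,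
      mul_one, Real.norm_eq_abs, ← ha] at hUSk
    -- hUSk : E z' - E u - -(lam k * a) ≤ α * |lam k| ^ q
    have hla : lam k * a = L * |a| ^ (1 + p) := by
      rcases eq_or_ne a 0 with h | h
      · rw [h, mul_zero, abs_zero, Real.zero_rpow (by positivity), mul_zero]
      · rw [hlamk]
        have : Real.sign a * L * |a| ^ p * a = L * (|a| ^ p * (Real.sign a * a)) := by ring
        rw [this, sign_mul_self_eq_abs,
          show (1 : ℝ) + p = p + 1 by ring,
          Real.rpow_add_one (abs_ne_zero.2 h)]
    have hαq : α * |lam k| ^ q = μ⁻¹ * L * |a| ^ (1 + p) := by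
      rw [habs, Real.mul_rpow hL0.le (Real.rpow_nonneg (abs_nonneg a) p),
        ← Real.rpow_mul (abs_nonneg a), hpq, hL,
        ← Real.rpow_mul hαμ.le,
        show -p * q = -1 + -p by rw [neg_mul, hpq]; ring,
        Real.rpow_add hαμ, Real.rpow_neg_one]
      field_simp
    have hEz : E (x k) ≤ E z' := by simpa using hline k hk1 1
    have h5 : ((μ - 1) / μ) * L * |a| ^ (1 + p)
        = L * |a| ^ (1 + p) - μ⁻¹ * (L * |a| ^ (1 + p)) := by
      field_simp
    rw [hla, hαq] at hUSk
    rw [h5]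
    linarith
  -- convexity lower bound
  have hd_u : HasFDerivAt E (E' u) u := hdiff u (hΩ _)
  have hgrad := convex_grad_le hconv hd_u xb
  have hEuu : E' u u = 0 := hderiv0 (k - 1) hj1
  have hconvex : E u - E xb ≤ -(E' u xb) := by
    rw [map_sub, hEuu, sub_zero] at hgrad
    linarith
  set e : ℝ := E u - E xb with he
  have he0 : 0 ≤ e := sub_nonneg.2 (hmin u)
  -- bound via an arbitrary representation
  have hEub : ∀ s ∈ {s : ℝ | ∃ (c : ℕ → ℝ) (g : ℕ → X), (∀ n, g n ∈ D) ∧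
      Summable (fun n => |c n|) ∧ HasSum (fun n => c n • g n) xb ∧ s = ∑' n, |c n|},
      |E' u xb| ≤ s * |a| := by
    rintro s ⟨c, g, hg, hc, hsum, hs⟩
    have h1 : HasSum (fun n => (E' u) (c n • g n)) (E' u xb) := hsum.mapL _
    have h2 : (fun n => (E' u) (c n • g n)) = fun n => c n * E' u (g n) := by
      funext n; rw [map_smul, smul_eq_mul]
    rw [h2] at h1
    have hb : ∀ n, |c n * E' u (g n)| ≤ |c n| * |a| := by
      intro n
      rw [abs_mul]
      exact mul_le_mul_of_nonneg_left (hφmax k hk1 (g n) (hg n)) (abs_nonneg _)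
    have hsummable : Summable (fun n => |c n * E' u (g n)|) :=
      Summable.of_nonneg_of_le (fun n => abs_nonneg _) hb (hc.mul_right _)
    calc |E' u xb| = |∑' n, c n * E' u (g n)| := by rw [h1.tsum_eq]
      _ ≤ ∑' n, |c n * E' u (g n)| := by
          simpa only [Real.norm_eq_abs] using
            norm_tsum_le_tsum_norm (f := fun n => c n * E' u (g n))
              (by simpa only [Real.norm_eq_abs] using hsummable)
      _ ≤ ∑' n, |c n| * |a| := Summable.tsum_le_tsum hb hsummable (hc.mul_right _)
      _ = (∑' n, |c n|) * |a| := tsum_mul_right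
      _ = s * |a| := by rw [hs]
  have hN0 : 0 ≤ dictNorm1 D xb := by
    unfold dictNorm1
    refine le_csInf hrep ?_
    rintro s ⟨c, g, hg, hc, hsum, hs⟩
    rw [hs]
    exact tsum_nonneg fun n => abs_nonneg _
  have hkey2 : e ≤ dictNorm1 D xb * |a| := by
    rcases (abs_nonneg a).eq_or_lt with h0 | h0
    · -- |a| = 0 : the derivative vanishes identically
      have hE0 : E' u = 0 := by
        apply ContinuousLinearMap.ext_on hdense
        intro g hg
        have h1 : |E' u g| ≤ |a| := hφmax k hk1 g hg
        have h2 : E' u g = 0 := abs_eq_zero.1 (le_antisymm (by rw [← h0] at h1; exact h1) (abs_nonneg _))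
        simpa using h2
      rw [← h0, mul_zero]
      have : E' u xb = 0 := by rw [hE0]; rfl
      rw [this] at hconvex
      simpa using hconvex
    · have h1 : ∀ s ∈ {s : ℝ | ∃ (c : ℕ → ℝ) (g : ℕ → X), (∀ n, g n ∈ D) ∧
          Summable (fun n => |c n|) ∧ HasSum (fun n => c n • g n) xb ∧ s = ∑' n, |c n|},
          e / |a| ≤ s := by
        intro s hs
        rw [div_le_iff₀ h0]
        exact le_trans (hconvex.trans (neg_le_abs _)) (hEub s hs)
      have h2 : e / |a| ≤ dictNorm1 D xb := by
        unfold dictNorm1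
        exact le_csInf hrep h1
      rw [div_le_iff₀ h0] at h2
      exact h2
  -- final arithmetic
  set N := dictNorm1 D xb with hN
  rw [show -(q / (q - 1)) = -(1 + p) by rw [hp]; field_simp; ring]
  rcases he0.eq_or_lt with he' | he'
  · rw [← he', zero_mul]
    have h1 : 0 ≤ (μ - 1) / μ * L * |a| ^ (1 + p) :=
      mul_nonneg (mul_nonneg (div_nonneg (by linarith) hμ0.le) hL0.le)
        (Real.rpow_nonneg (abs_nonneg a) _)
    linarith [hdecr]
  · have hNpos : 0 < N := by
      rcases hN0.eq_or_lt with h | h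
      · exfalso; rw [← h, zero_mul] at hkey2; linarith
      · exact h
    have hdiv : e / N ≤ |a| := by
      rw [div_le_iff₀ hNpos]
      linarith [hkey2]
    have hpow : (e / N) ^ (1 + p) ≤ |a| ^ (1 + p) :=
      Real.rpow_le_rpow (by positivity) hdiv (by positivity)
    have hexp : e * (1 - (μ - 1) / μ * L * N ^ (-(1 + p)) * e ^ p)
        = e - (μ - 1) / μ * L * (e / N) ^ (1 + p) := by
      rw [show (1 : ℝ) + p = p + 1 by ring, Real.rpow_neg hNpos.le,
        Real.div_rpow he0 hNpos.le, Real.rpow_add_one (ne_of_gt he')]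
      have hNp : 0 < N ^ (p + 1) := Real.rpow_pos_of_pos hNpos _
      field_simp
    rw [hexp]
    have hC : 0 ≤ (μ - 1) / μ * L :=
      mul_nonneg (div_nonneg (by linarith) hμ0.le) hL0.le
    have hmul := mul_le_mul_of_nonneg_left hpow hC
    linarith [hdecr, hmul]
end

section
/- Convergence rate of RPGA(co): under Condition 0 and the US condition with exponent 1 < q ≤ 2, the iterates of RPGA(co) with parameter μ > max{1, α^{-1}M₀M^{1-q}} satisfy, for k ≥ 2, E(x_k) - E(x̄) ≤ αμ ‖x̄‖₁^q ( (αμ‖x̄‖₁^q/(E(0)-E(x̄)))^{1/(q-1)} + ((μ-1)/μ)(k-1) )^{1-q}; in particular E(x_k) - E(x̄) = O(k^{1-q}). -/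
open Real Filter

lemma bern {u p : ℝ} (hu0 : 0 ≤ u) (hu1 : u < 1) (hp : 1 ≤ p) :
    1 + p * u ≤ (1 - u) ^ (-p) := by
  have h1u : 0 < 1 - u := by linarith
  set s : ℝ := u / (1 - u) with hs
  have hs0 : 0 ≤ s := div_nonneg hu0 h1u.le
  have hus : u ≤ s := by
    rw [hs, le_div_iff₀ h1u]; nlinarith
  have h := one_add_mul_self_le_rpow_one_add (by linarith : (-1:ℝ) ≤ s) hp
  have h1s : 1 + s = (1 - u)⁻¹ := by
    rw [hs]; field_simp; ring
  calc 1 + p * u ≤ 1 + p * s := by nlinarith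
    _ ≤ (1 + s) ^ p := h
    _ = (1 - u) ^ (-p) := by
        rw [h1s, ← Real.rpow_neg_one (1-u), ← Real.rpow_mul h1u.le]
        norm_num

lemma rec_bound {θ p : ℝ} (hθ : 0 ≤ θ) (hp : 1 ≤ p) (b : ℕ → ℝ)
    (hb : ∀ m, 0 ≤ b m) (h0 : 0 < b 0)
    (hrec : ∀ m, b (m + 1) ≤ b m - θ * b m ^ (1 + p)) :
    ∀ k : ℕ, b k ≤ (b 0 ^ (-p) + θ * k) ^ (-(1 / p)) := by
  have hp0 : 0 < p := lt_of_lt_of_le one_pos hp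
  have hnp : -p ≤ 0 := by linarith
  have hn1p : -(1/p) ≤ 0 := by
    have : 0 < 1/p := by positivity
    linarith
  have hbase : ∀ k : ℕ, 0 < b 0 ^ (-p) + θ * k := fun k =>
    add_pos_of_pos_of_nonneg (Real.rpow_pos_of_pos h0 _)
      (mul_nonneg hθ (Nat.cast_nonneg k))
  have inv1 : ∀ {c B : ℝ}, 0 < c → 0 < B → B ≤ c ^ (-p) → c ≤ B ^ (-(1/p)) := by
    intro c B hc hB h
    have h2 := Real.rpow_le_rpow_of_nonpos hB h hn1p
    calc c = (c ^ (-p)) ^ (-(1/p)) := by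
            rw [← Real.rpow_mul hc.le]
            rw [show -p * -(1/p) = 1 by field_simp]
            exact (Real.rpow_one c).symm
      _ ≤ B ^ (-(1/p)) := h2
  intro k
  induction k with
  | zero =>
    apply inv1 h0 (by simpa using hbase 0)
    simp
  | succ k ih =>
    rcases le_or_gt (b (k+1)) 0 with hk1 | hk1
    · exact le_trans hk1 (Real.rpow_nonneg (hbase (k+1)).le _)
    rcases eq_or_lt_of_le (hb k) with hk | hk
    · exfalso
      have := hrec k
      rw [← hk] at this
      simp [Real.zero_rpow (by positivity : (1:ℝ) + p ≠ 0)] at this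
      linarith
    set u : ℝ := θ * b k ^ p with hu
    have hbp : (0:ℝ) < b k ^ p := Real.rpow_pos_of_pos hk p
    have hu0 : 0 ≤ u := mul_nonneg hθ hbp.le
    have hsplit : b k ^ (1 + p) = b k * b k ^ p := by
      rw [Real.rpow_add hk, Real.rpow_one]
    have hrec' : b (k+1) ≤ b k * (1 - u) := by
      have := hrec k
      rw [hsplit] at this; rw [hu]; nlinarith
    have hu1 : u < 1 := by
      by_contra hcon
      push_neg at hcon
      have : b k * (1 - u) ≤ 0 := mul_nonpos_of_nonneg_of_nonpos hk.le (by linarith)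
      linarith
    have ihinv : b 0 ^ (-p) + θ * k ≤ b k ^ (-p) := by
      have h2 := Real.rpow_le_rpow_of_nonpos hk ih hnp
      calc b 0 ^ (-p) + θ * k
          = ((b 0 ^ (-p) + θ * k) ^ (-(1/p))) ^ (-p) := by
            rw [← Real.rpow_mul (hbase k).le]
            rw [show -(1/p) * -p = 1 by field_simp]
            exact (Real.rpow_one _).symm
        _ ≤ b k ^ (-p) := h2
    have step : b k ^ (-p) + θ ≤ b (k+1) ^ (-p) := by
      have hmono := Real.rpow_le_rpow_of_nonpos hk1 hrec' hnp
      have hber := bern hu0 hu1 hp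
      have hmul : (b k * (1 - u)) ^ (-p) = b k ^ (-p) * (1 - u) ^ (-p) :=
        Real.mul_rpow hk.le (by linarith : (0:ℝ) ≤ 1 - u)
      have hbkneg : 0 < b k ^ (-p) := Real.rpow_pos_of_pos hk _
      have hmm : b k ^ (-p) * (1 + p * u) ≤ b k ^ (-p) * (1 - u) ^ (-p) :=
        mul_le_mul_of_nonneg_left hber hbkneg.le
      have hexp : b k ^ (-p) * (p * u) = p * θ := by
        rw [hu]
        rw [show b k ^ (-p) * (p * (θ * b k ^ p)) = p * θ * (b k ^ (-p) * b k ^ p) by ring]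
        rw [← Real.rpow_add hk]
        simp
      have hpθ : θ ≤ p * θ := by nlinarith
      calc b k ^ (-p) + θ ≤ b k ^ (-p) + p * θ := by linarith
        _ = b k ^ (-p) * (1 + p * u) := by rw [mul_add, mul_one, hexp]
        _ ≤ b k ^ (-p) * (1 - u) ^ (-p) := hmm
        _ = (b k * (1 - u)) ^ (-p) := hmul.symm
        _ ≤ b (k+1) ^ (-p) := hmono
    apply inv1 hk1 (hbase (k+1))
    push_cast
    push_cast at ihinv
    linarith

lemma convex_deriv_le {X : Type*} [NormedAddCommGroup X] [NormedSpace ℝ X]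
    {E : X → ℝ} (hconv : ConvexOn ℝ Set.univ E) {z : X} {L : X →L[ℝ] ℝ}
    (hd : HasFDerivAt E L z) (w : X) : L (w - z) ≤ E w - E z := by
  set g : ℝ → ℝ := fun t => E (z + t • (w - z)) with hg
  have hgd : HasDerivAt g (L (w - z)) 0 := by
    have h1 : HasDerivAt (fun t : ℝ => z + t • (w - z)) (w - z) 0 := by
      simpa using ((hasDerivAt_id (0:ℝ)).smul_const (w - z)).const_add z
    have hd' : HasFDerivAt E L (z + (0:ℝ) • (w - z)) := by simpa using hd
    have := hd'.comp_hasDerivAt 0 h1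
    exact this
  have hslope : ∀ t ∈ Set.Ioc (0:ℝ) 1, slope g 0 t ≤ E w - E z := by
    intro t ht
    have h01 : (0:ℝ) ≤ 1 - t := by linarith [ht.2]
    have hcx := hconv.2 (Set.mem_univ z) (Set.mem_univ w) h01 ht.1.le (by ring)
    have hgt : g t ≤ (1 - t) * E z + t * E w := by
      have : (1 - t) • z + t • w = z + t • (w - z) := by
        simp [smul_sub, sub_smul]; abel
      rw [hg]; simp only []
      rw [← this]
      simpa using hcx
    rw [slope_def_field]
    have : (g t - g 0) / t ≤ E w - E z := by
      rw [div_le_iff₀ ht.1]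
      have hg0 : g 0 = E z := by simp [hg]
      nlinarith [hgt, ht.1]
    simpa [hg, div_eq_inv_mul] using this
  have htend : Tendsto (slope g 0) (nhdsWithin 0 (Set.Ioc (0:ℝ) 1)) (nhds (L (w - z))) := by
    have := hasDerivAt_iff_tendsto_slope.mp hgd
    exact this.mono_left (nhdsWithin_mono 0 (fun y hy => hy.1.ne'))
  haveI : (nhdsWithin (0:ℝ) (Set.Ioc (0:ℝ) 1)).NeBot := left_nhdsWithin_Ioc_neBot one_pos
  have : L (w - z) ≤ E w - E z := by
    refine le_of_tendsto htend ?_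
    filter_upwards [self_mem_nhdsWithin] using hslope
  exact this


lemma eth_aux {θ c A1 Kp K y : ℝ} (hK : K ≠ 0) (hKp : Kp ≠ 0) (hA1 : A1 ≠ 0)
    (h : c * Kp = θ * A1) : θ * (y / (K * Kp)) = c * (y / A1) / K := by
  field_simp
  linear_combination (-y) * h

set_option maxHeartbeats 1000000 in
theorem rpga_convergence_rate
    {X : Type*} [NormedAddCommGroup X] [NormedSpace ℝ X] [CompleteSpace X]
    (E : X → ℝ) (E' : X → X →L[ℝ] ℝ) (D : Set X)
    (α M M₀ μ q : ℝ)
    (hα : 0 < α) (hM : 0 < M) (hM₀ : 0 < M₀) (hq : 1 < q) (hq2 : q ≤ 2)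
    (hμ : μ > max 1 (α⁻¹ * M₀ * M ^ (1 - q)))
    (hconv : ConvexOn ℝ Set.univ E)
    (hD : ∀ f ∈ D, ‖f‖ = 1)
    (hdense : Dense (Submodule.span ℝ D : Set X))
    (hΩbdd : Bornology.IsBounded {z : X | E z ≤ E 0})
    (hdiff : ∀ z : X, E z ≤ E 0 → HasFDerivAt E (E' z) z)
    (hbound : ∀ z : X, E z ≤ E 0 → ‖E' z‖ ≤ M₀)
    (hUS : ∀ z : X, E z ≤ E 0 → ∀ z' : X, ‖z - z'‖ ≤ M →
      E z' - E z - E' z (z' - z) ≤ α * ‖z' - z‖ ^ q)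
    (xb : X) (hmin : ∀ z : X, E xb ≤ E z)
    (hrep : {s : ℝ | ∃ (c : ℕ → ℝ) (g : ℕ → X), (∀ n, g n ∈ D) ∧
      Summable (fun n => |c n|) ∧ HasSum (fun n => c n • g n) xb ∧ s = ∑' n, |c n|}.Nonempty)
    -- the iterates of RPGA(co)
    (x : ℕ → X) (φ : ℕ → X) (lam t : ℕ → ℝ)
    (hx0 : x 0 = 0)
    (hφD : ∀ m, 1 ≤ m → φ m ∈ D)
    (hφmax : ∀ m, 1 ≤ m → ∀ g ∈ D, |E' (x (m - 1)) g| ≤ |E' (x (m - 1)) (φ m)|)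
    (hlam : ∀ m, 1 ≤ m → lam m = Real.sign (E' (x (m - 1)) (φ m)) *
      (α * μ) ^ (-(1 / (q - 1))) * |E' (x (m - 1)) (φ m)| ^ (1 / (q - 1)))
    (hxm : ∀ m, 1 ≤ m → x m = t m • (x (m - 1) - lam m • φ m))
    (hline : ∀ m, 1 ≤ m → ∀ s : ℝ, E (x m) ≤ E (s • (x (m - 1) - lam m • φ m))) :
    ∀ k, 2 ≤ k →
      E (x k) - E xb ≤ α * μ * (dictNorm1 D xb) ^ q *
        ((α * μ * (dictNorm1 D xb) ^ q / (E 0 - E xb)) ^ (1 / (q - 1)) +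
          ((μ - 1) / μ) * ((k : ℝ) - 1)) ^ (1 - q) := by
  intro k hk
  -- basic constants
  have hμ1 : 1 < μ := lt_of_le_of_lt (le_max_left _ _) hμ
  have hμ2 : α⁻¹ * M₀ * M ^ (1 - q) < μ := lt_of_le_of_lt (le_max_right _ _) hμ
  have hq1 : 0 < q - 1 := by linarith
  have hq1ne : q - 1 ≠ 0 := ne_of_gt hq1
  set p : ℝ := 1 / (q - 1) with hpdef
  have hp0 : 0 < p := by positivity
  have hp1 : 1 ≤ p := by
    rw [hpdef, le_div_iff₀ hq1]; linarith
  have hαμ : 0 < α * μ := by positivity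
  set θ : ℝ := (μ - 1) / μ with hθdef
  have hθ0 : 0 ≤ θ := by
    rw [hθdef]; exact div_nonneg (by linarith) (by linarith)
  set c : ℝ := θ * (α * μ) ^ (-p) with hcdef
  have hc0 : 0 ≤ c := mul_nonneg hθ0 (Real.rpow_nonneg hαμ.le _)
  set A : ℝ := dictNorm1 D xb with hAdef
  have hA0 : 0 ≤ A := by
    apply Real.sInf_nonneg
    rintro s ⟨cc, g, hg, hsum, hhs, rfl⟩
    exact tsum_nonneg fun n => abs_nonneg _
  have hpq : p * q = 1 + p := by
    rw [hpdef]; field_simp; ring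
  have hqp1 : (q - 1) * p = 1 := by
    rw [hpdef]; field_simp
  -- one-step decrease
  have key : ∀ m : ℕ, E (x m) ≤ E 0 →
      E (x (m + 1)) ≤ E (x m) - c * |E' (x m) (φ (m + 1))| ^ (1 + p) := by
    intro m hEm
    have hm1 : 1 ≤ m + 1 := Nat.le_add_left 1 m
    have hlam' := hlam (m + 1) hm1
    have hline' := hline (m + 1) hm1
    simp only [Nat.add_sub_cancel] at hlam' hline'
    set d : ℝ := E' (x m) (φ (m + 1)) with hddef
    set lm : ℝ := lam (m + 1) with hlmdef
    have hφn : ‖φ (m + 1)‖ = 1 := hD _ (hφD _ hm1)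
    have hdM : |d| ≤ M₀ := by
      have h1 := (E' (x m)).le_opNorm (φ (m + 1))
      rw [hφn, mul_one, Real.norm_eq_abs] at h1
      exact le_trans h1 (hbound _ hEm)
    rcases eq_or_ne d 0 with h0 | h0
    · have hlm0 : lm = 0 := by
        rw [hlam', h0]; simp
      have h2 := hline' 1
      rw [hlm0] at h2
      simp only [zero_smul, sub_zero, one_smul] at h2
      have h3 : c * |d| ^ (1 + p) = 0 := by
        rw [h0, abs_zero, Real.zero_rpow (by positivity : (1:ℝ) + p ≠ 0), mul_zero]
      rw [h3]
      linarith
    · have hdpos : 0 < |d| := abs_pos.mpr h0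
      have hsignd : Real.sign d * d = |d| := by
        rcases h0.lt_or_gt with h | h
        · rw [Real.sign_of_neg h, abs_of_neg h]; ring
        · rw [Real.sign_of_pos h, abs_of_pos h]; ring
      have habs_sign : |Real.sign d| = 1 := by
        rcases h0.lt_or_gt with h | h
        · rw [Real.sign_of_neg h]; norm_num
        · rw [Real.sign_of_pos h]; norm_num
      have hlmabs : |lm| = (α * μ) ^ (-p) * |d| ^ p := by
        rw [hlam', abs_mul, abs_mul, habs_sign, one_mul,
          abs_of_nonneg (Real.rpow_nonneg hαμ.le _),
          abs_of_nonneg (Real.rpow_nonneg (abs_nonneg _) _)]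
      have hlmd : lm * d = (α * μ) ^ (-p) * |d| ^ (1 + p) := by
        rw [hlam']
        have hsplit : |d| ^ (1 + p) = |d| ^ p * |d| := by
          rw [add_comm, Real.rpow_add hdpos, Real.rpow_one]
        rw [hsplit,
          show Real.sign d * (α * μ) ^ (-p) * |d| ^ p * d
            = (α * μ) ^ (-p) * (|d| ^ p * (Real.sign d * d)) by ring, hsignd]
      -- step length bounded by M
      have hdαμ : |d| ≤ α * μ * M ^ (q - 1) := by
        have hMq : (0:ℝ) < M ^ (q - 1) := Real.rpow_pos_of_pos hM _
        have h1 : M₀ * M ^ (1 - q) < α * μ := by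
          have h := mul_lt_mul_of_pos_left hμ2 hα
          have he : α * (α⁻¹ * M₀ * M ^ (1 - q)) = M₀ * M ^ (1 - q) := by
            field_simp
          rw [he] at h
          exact h
        have h2 : M ^ (1 - q) = (M ^ (q - 1))⁻¹ := by
          rw [show (1 - q) = -(q - 1) by ring, Real.rpow_neg hM.le]
        rw [h2] at h1
        have h3 : M₀ < α * μ * M ^ (q - 1) := by
          have h := mul_lt_mul_of_pos_right h1 hMq
          rwa [inv_mul_cancel_right₀ (ne_of_gt hMq)] at h
        linarith [hdM]
      have hlmM : |lm| ≤ M := by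
        rw [hlmabs]
        have h1 : |d| ^ p ≤ (α * μ * M ^ (q - 1)) ^ p :=
          Real.rpow_le_rpow (abs_nonneg _) hdαμ hp0.le
        have h2 : (α * μ * M ^ (q - 1)) ^ p = (α * μ) ^ p * M := by
          rw [Real.mul_rpow hαμ.le (Real.rpow_nonneg hM.le _),
            ← Real.rpow_mul hM.le, hqp1, Real.rpow_one]
        have h3 : (α * μ) ^ (-p) * (α * μ) ^ p = 1 := by
          rw [← Real.rpow_add hαμ]; simp
        calc (α * μ) ^ (-p) * |d| ^ p ≤ (α * μ) ^ (-p) * ((α * μ) ^ p * M) := by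
              rw [h2] at h1
              exact mul_le_mul_of_nonneg_left h1 (Real.rpow_nonneg hαμ.le _)
          _ = M := by rw [← mul_assoc, h3, one_mul]
      -- uniform smoothness step
      have hnorm : ‖x m - (x m - lm • φ (m + 1))‖ ≤ M := by
        simp only [sub_sub_cancel, norm_smul, hφn, mul_one, Real.norm_eq_abs]
        exact hlmM
      have hUS' := hUS (x m) hEm (x m - lm • φ (m + 1)) hnorm
      have hd1 : (E' (x m)) (x m - lm • φ (m + 1) - x m) = -(lm * d) := by
        rw [show x m - lm • φ (m + 1) - x m = -(lm • φ (m + 1)) by abel]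
        rw [map_neg, map_smul]
        simp [hddef]
      have hd2 : ‖x m - lm • φ (m + 1) - x m‖ = |lm| := by
        rw [show x m - lm • φ (m + 1) - x m = -(lm • φ (m + 1)) by abel]
        rw [norm_neg, norm_smul, hφn, mul_one, Real.norm_eq_abs]
      rw [hd1, hd2] at hUS'
      -- compute α * |lm| ^ q
      have hlq : α * |lm| ^ q = (1 / μ) * ((α * μ) ^ (-p) * |d| ^ (1 + p)) := by
        rw [hlmabs, Real.mul_rpow (Real.rpow_nonneg hαμ.le _) (Real.rpow_nonneg (abs_nonneg _) _),
          ← Real.rpow_mul hαμ.le, ← Real.rpow_mul (abs_nonneg d), hpq]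
        rw [show -p * q = -(1 + p) by rw [neg_mul, hpq]]
        rw [show -(1 + p) = -p + (-1) by ring, Real.rpow_add hαμ, Real.rpow_neg_one]
        field_simp
      have hEz' : E (x m - lm • φ (m + 1)) ≤ E (x m) - c * |d| ^ (1 + p) := by
        have hcc : c * |d| ^ (1 + p)
            = (α * μ) ^ (-p) * |d| ^ (1 + p) - (1 / μ) * ((α * μ) ^ (-p) * |d| ^ (1 + p)) := by
          rw [hcdef, hθdef]
          have hμ0 : μ ≠ 0 := by positivity
          field_simp
        rw [hcc]
        rw [hlmd, hlq] at hUS'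
        linarith
      have hfin := hline' 1
      rw [one_smul] at hfin
      linarith
  -- always below level set
  have hΩ : ∀ m, E (x m) ≤ E 0 := by
    intro m
    induction m with
    | zero => rw [hx0]
    | succ m ih =>
      have h1 := key m ih
      have h2 : 0 ≤ c * |E' (x m) (φ (m + 1))| ^ (1 + p) :=
        mul_nonneg hc0 (Real.rpow_nonneg (abs_nonneg _) _)
      linarith
  have hdec : ∀ m, E (x (m + 1)) ≤ E (x m) := by
    intro m
    have h1 := key m (hΩ m)
    have h2 : 0 ≤ c * |E' (x m) (φ (m + 1))| ^ (1 + p) :=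
      mul_nonneg hc0 (Real.rpow_nonneg (abs_nonneg _) _)
    linarith
  have hmono : ∀ m n, m ≤ n → E (x n) ≤ E (x m) := by
    intro m n hmn
    induction n with
    | zero => simp_all
    | succ n ih =>
      rcases Nat.lt_or_ge m (n + 1) with h | h
      · exact le_trans (hdec n) (ih (Nat.lt_succ_iff.mp h))
      · have : m = n + 1 := le_antisymm hmn h
        rw [this]
  -- derivative vanishes along iterate
  have hEzero : ∀ m, E' (x m) (x m) = 0 := by
    intro m
    rcases Nat.eq_zero_or_pos m with h | h
    · rw [h, hx0]; simp
    · have hm1 : 1 ≤ m := h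
      set w : X := x (m - 1) - lam m • φ m with hwdef
      have hxw : x m = t m • w := hxm m hm1
      have hlocmin : IsLocalMin (fun s : ℝ => E (s • w)) (t m) := by
        apply IsMinOn.isLocalMin _ (Filter.univ_mem)
        intro s _
        simp only
        rw [← hxw]
        exact hline m hm1 s
      have hder : HasDerivAt (fun s : ℝ => E (s • w)) (E' (x m) w) (t m) := by
        have h1 : HasDerivAt (fun s : ℝ => s • w) w (t m) := by
          simpa using (hasDerivAt_id (t m)).smul_const w
        have h2 : HasFDerivAt E (E' (x m)) ((t m) • w) := by
          rw [← hxw]; exact hdiff (x m) (hΩ m)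
        have := h2.comp_hasDerivAt (t m) h1
        exact this
      have hz := hlocmin.hasDerivAt_eq_zero hder
      nth_rewrite 2 [hxw]
      rw [map_smul, hz]
      simp
  -- duality with the dictionary norm
  have hdual : ∀ m : ℕ, |E' (x m) xb| ≤ |E' (x m) (φ (m + 1))| * A := by
    intro m
    set r : ℝ := |E' (x m) (φ (m + 1))| with hrdef
    have hr0 : 0 ≤ r := abs_nonneg _
    have hrg : ∀ g ∈ D, |E' (x m) g| ≤ r := by
      intro g hg
      have := hφmax (m + 1) (Nat.le_add_left 1 m) g hg
      simpa using this
    -- bound against every representation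
    have hbd : ∀ s ∈ {s : ℝ | ∃ (cc : ℕ → ℝ) (g : ℕ → X), (∀ n, g n ∈ D) ∧
        Summable (fun n => |cc n|) ∧ HasSum (fun n => cc n • g n) xb ∧ s = ∑' n, |cc n|},
        |E' (x m) xb| ≤ r * s := by
      rintro s ⟨cc, g, hg, hsum, hhs, rfl⟩
      have hL : HasSum (fun n => E' (x m) (cc n • g n)) (E' (x m) xb) :=
        (E' (x m)).hasSum hhs
      have hle : ∀ n, |E' (x m) (cc n • g n)| ≤ |cc n| * r := by
        intro n
        rw [map_smul, smul_eq_mul, abs_mul]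
        exact mul_le_mul_of_nonneg_left (hrg (g n) (hg n)) (abs_nonneg _)
      have hsum2 : Summable (fun n => |cc n| * r) := hsum.mul_right r
      have hsum1 : Summable (fun n => |E' (x m) (cc n • g n)|) :=
        Summable.of_nonneg_of_le (fun n => abs_nonneg _) hle hsum2
      calc |E' (x m) xb| = |∑' n, E' (x m) (cc n • g n)| := by rw [hL.tsum_eq]
        _ ≤ ∑' n, |E' (x m) (cc n • g n)| := by
            have := norm_tsum_le_tsum_norm (f := fun n => E' (x m) (cc n • g n))
              (by simpa only [Real.norm_eq_abs] using hsum1)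
            simpa only [Real.norm_eq_abs] using this
        _ ≤ ∑' n, |cc n| * r := Summable.tsum_le_tsum hle hsum1 hsum2
        _ = (∑' n, |cc n|) * r := by rw [tsum_mul_right]
        _ = r * (∑' n, |cc n|) := by ring
    rcases eq_or_lt_of_le hr0 with hr | hr
    · obtain ⟨s, hs⟩ := hrep
      have := hbd s hs
      rw [← hr] at this
      simp only [zero_mul] at this
      have h2 : |E' (x m) xb| = 0 := le_antisymm this (abs_nonneg _)
      rw [h2, ← hr]
      simp
    · have hlb : |E' (x m) xb| / r ≤ A := by
        apply le_csInf hrep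
        intro s hs
        rw [div_le_iff₀ hr]
        calc |E' (x m) xb| ≤ r * s := hbd s hs
          _ = s * r := by ring
      calc |E' (x m) xb| = r * (|E' (x m) xb| / r) := by field_simp
        _ ≤ r * A := mul_le_mul_of_nonneg_left hlb hr0
  -- gradient lower bound
  have hgrad : ∀ m : ℕ, E (x m) - E xb ≤ A * |E' (x m) (φ (m + 1))| := by
    intro m
    have h1 := convex_deriv_le hconv (hdiff (x m) (hΩ m)) xb
    have h2 : (E' (x m)) (xb - x m) = (E' (x m)) xb := by
      rw [map_sub, hEzero m, sub_zero]
    rw [h2] at h1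
    have h3 := hdual m
    have h4 : -(E' (x m)) xb ≤ |E' (x m) xb| := neg_le_abs _
    have := hmin (x m)
    nlinarith [abs_nonneg ((E' (x m)) xb)]
  -- error sequence
  set a : ℕ → ℝ := fun m => E (x m) - E xb with hadef
  have ha0 : ∀ m, 0 ≤ a m := fun m => by
    simp only [hadef]; linarith [hmin (x m)]
  have ha0' : a 0 = E 0 - E xb := by simp [hadef, hx0]
  have hE0xb : 0 ≤ E 0 - E xb := by linarith [hmin (0 : X)]
  -- RHS is nonneg
  have hRHS : 0 ≤ α * μ * A ^ q *
      ((α * μ * A ^ q / (E 0 - E xb)) ^ (1 / (q - 1)) + θ * ((k : ℝ) - 1)) ^ (1 - q) := by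
    have hk1 : (0:ℝ) ≤ (k : ℝ) - 1 := by
      have : (2:ℝ) ≤ (k : ℝ) := by exact_mod_cast hk
      linarith
    have h1 : (0:ℝ) ≤ α * μ * A ^ q := by
      have := Real.rpow_nonneg hA0 q
      positivity
    have h2 : (0:ℝ) ≤ α * μ * A ^ q / (E 0 - E xb) := div_nonneg h1 hE0xb
    have h3 : (0:ℝ) ≤ (α * μ * A ^ q / (E 0 - E xb)) ^ (1 / (q - 1)) :=
      Real.rpow_nonneg h2 _
    have h4 : (0:ℝ) ≤ (α * μ * A ^ q / (E 0 - E xb)) ^ (1 / (q - 1)) + θ * ((k : ℝ) - 1) := by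
      nlinarith
    exact mul_nonneg h1 (Real.rpow_nonneg h4 _)
  rcases eq_or_lt_of_le (ha0 0) with hz0 | hz0
  · -- degenerate case: E 0 = E xb
    have : a k ≤ 0 := by
      have := hmono 0 k (Nat.zero_le k)
      simp only [hadef] at *
      rw [ha0'] at hz0
      linarith
    calc E (x k) - E xb = a k := rfl
      _ ≤ 0 := this
      _ ≤ _ := hRHS
  · -- main case
    have hApos : 0 < A := by
      rcases eq_or_lt_of_le hA0 with hAz | hAp
      · exfalso
        -- A = 0 forces xb = 0, contradicting 0 < a 0
        have hxb : xb = 0 := by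
          have hsmall : ∀ ε : ℝ, 0 < ε → ‖xb‖ < ε := by
            intro ε hε
            have hsinf : dictNorm1 D xb = sInf {s : ℝ | ∃ (cc : ℕ → ℝ) (g : ℕ → X),
                (∀ n, g n ∈ D) ∧ Summable (fun n => |cc n|) ∧
                HasSum (fun n => cc n • g n) xb ∧ s = ∑' n, |cc n|} := rfl
            have hlt : sInf {s : ℝ | ∃ (cc : ℕ → ℝ) (g : ℕ → X),
                (∀ n, g n ∈ D) ∧ Summable (fun n => |cc n|) ∧
                HasSum (fun n => cc n • g n) xb ∧ s = ∑' n, |cc n|} < ε := by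
              rw [← hsinf, ← hAdef, ← hAz]; exact hε
            obtain ⟨s, hs, hsε⟩ := exists_lt_of_csInf_lt hrep hlt
            obtain ⟨cc, g, hg, hsum, hhs, rfl⟩ := hs
            have hnn : (fun n => ‖cc n • g n‖) = fun n => |cc n| := by
              funext n
              rw [norm_smul, hD _ (hg n), mul_one, Real.norm_eq_abs]
            have h1 : ‖xb‖ ≤ ∑' n, |cc n| := by
              rw [← hhs.tsum_eq]
              have := norm_tsum_le_tsum_norm (f := fun n => cc n • g n) (by rw [hnn]; exact hsum)
              rw [hnn] at this
              exact this
            exact lt_of_le_of_lt h1 hsε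
          have : ‖xb‖ ≤ 0 := by
            by_contra hcon
            push_neg at hcon
            exact lt_irrefl _ (hsmall ‖xb‖ hcon)
          simpa using le_antisymm this (norm_nonneg xb)
        have : a 0 = 0 := by
          rw [ha0', hxb]
          ring
        rw [this] at hz0
        exact lt_irrefl 0 hz0
      · exact hAp
    set K : ℝ := α * μ * A ^ q with hKdef
    have hK : 0 < K := by
      have := Real.rpow_pos_of_pos hApos q
      rw [hKdef]; positivity
    have hKp : K ^ p = (α * μ) ^ p * A ^ (1 + p) := by
      rw [hKdef, Real.mul_rpow hαμ.le (Real.rpow_nonneg hA0 _),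
        ← Real.rpow_mul hA0, show q * p = 1 + p by rw [mul_comm]; exact hpq]
    have hcKp : c * K ^ p = θ * A ^ (1 + p) := by
      rw [hKp, hcdef,
        show θ * (α * μ) ^ (-p) * ((α * μ) ^ p * A ^ (1 + p))
          = θ * ((α * μ) ^ (-p) * (α * μ) ^ p) * A ^ (1 + p) by ring,
        ← Real.rpow_add hαμ]
      simp
    set b : ℕ → ℝ := fun m => a m / K with hbdef
    have hb : ∀ m, 0 ≤ b m := fun m => div_nonneg (ha0 m) hK.le
    have hb0pos : 0 < b 0 := div_pos hz0 hK
    have hAp1 : (0:ℝ) < A ^ (1 + p) := Real.rpow_pos_of_pos hApos _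
    have hKp0 : (0:ℝ) < K ^ p := Real.rpow_pos_of_pos hK _
    have hrecb : ∀ m, b (m + 1) ≤ b m - θ * b m ^ (1 + p) := by
      intro m
      have h1 := key m (hΩ m)
      have h1' : a (m + 1) ≤ a m - c * |E' (x m) (φ (m + 1))| ^ (1 + p) := by
        simp only [hadef]; linarith
      have h2 : a m ≤ A * |E' (x m) (φ (m + 1))| := hgrad m
      have h3 : a m ^ (1 + p) ≤ A ^ (1 + p) * |E' (x m) (φ (m + 1))| ^ (1 + p) := by
        rw [← Real.mul_rpow hA0 (abs_nonneg _)]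
        exact Real.rpow_le_rpow (ha0 m) h2 (by positivity)
      have h4 : c * (a m ^ (1 + p) / A ^ (1 + p)) ≤ c * |E' (x m) (φ (m + 1))| ^ (1 + p) := by
        apply mul_le_mul_of_nonneg_left _ hc0
        rw [div_le_iff₀ hAp1]
        calc a m ^ (1 + p) ≤ A ^ (1 + p) * |E' (x m) (φ (m + 1))| ^ (1 + p) := h3
          _ = |E' (x m) (φ (m + 1))| ^ (1 + p) * A ^ (1 + p) := by ring
      have h5 : a (m + 1) ≤ a m - c * (a m ^ (1 + p) / A ^ (1 + p)) := by linarith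
      have e1 : b m ^ (1 + p) = a m ^ (1 + p) / K ^ (1 + p) :=
        Real.div_rpow (ha0 m) hK.le _
      have e2 : K ^ ((1:ℝ) + p) = K * K ^ p := by
        rw [Real.rpow_add hK, Real.rpow_one]
      have eθ : θ * b m ^ (1 + p) = c * (a m ^ (1 + p) / A ^ (1 + p)) / K := by
        rw [e1, e2]
        exact eth_aux (ne_of_gt hK) (ne_of_gt hKp0) (ne_of_gt hAp1) hcKp
      rw [hbdef]
      simp only
      rw [show a (m+1) / K = a (m+1) * K⁻¹ by ring]
      calc a (m + 1) * K⁻¹ ≤ (a m - c * (a m ^ (1 + p) / A ^ (1 + p))) * K⁻¹ := by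
            apply mul_le_mul_of_nonneg_right h5
            positivity
        _ = a m / K - c * (a m ^ (1 + p) / A ^ (1 + p)) / K := by ring
        _ = a m / K - θ * b m ^ (1 + p) := by rw [eθ]
    have hbk := rec_bound hθ0 hp1 b hb hb0pos hrecb k
    have hk1 : (1:ℝ) ≤ (k:ℝ) := by
      have : (2:ℝ) ≤ (k:ℝ) := by exact_mod_cast hk
      linarith
    have hbase1 : 0 < b 0 ^ (-p) + θ * ((k:ℝ) - 1) :=
      add_pos_of_pos_of_nonneg (Real.rpow_pos_of_pos hb0pos _)
        (mul_nonneg hθ0 (by linarith))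
    have hweak : (b 0 ^ (-p) + θ * (k:ℝ)) ^ (-(1/p)) ≤ (b 0 ^ (-p) + θ * ((k:ℝ) - 1)) ^ (-(1/p)) := by
      apply Real.rpow_le_rpow_of_nonpos hbase1
      · have : θ * ((k:ℝ) - 1) ≤ θ * (k:ℝ) := by nlinarith
        linarith
      · have : 0 < 1/p := by positivity
        linarith
    have hak : a k ≤ K * (b 0 ^ (-p) + θ * ((k:ℝ) - 1)) ^ (-(1/p)) := by
      have : a k = K * b k := by
        rw [hbdef]; field_simp
      rw [this]
      apply mul_le_mul_of_nonneg_left _ hK.le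
      exact le_trans hbk hweak
    -- rewrite target
    have hb0p : b 0 ^ (-p) = (K / (E 0 - E xb)) ^ p := by
      rw [hbdef]
      simp only
      rw [ha0']
      rw [Real.rpow_neg (div_nonneg (by linarith [ha0' ▸ hz0]) hK.le),
        ← Real.inv_rpow (div_nonneg (by linarith [ha0' ▸ hz0]) hK.le), inv_div]
    have hexp : (1:ℝ) - q = -(1/p) := by
      rw [hpdef, one_div_one_div]; ring
    calc E (x k) - E xb = a k := rfl
      _ ≤ K * (b 0 ^ (-p) + θ * ((k:ℝ) - 1)) ^ (-(1/p)) := hak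
      _ = α * μ * A ^ q * ((K / (E 0 - E xb)) ^ p + θ * ((k:ℝ) - 1)) ^ (1 - q) := by
          rw [hb0p, hexp, hKdef]
end

section
/- Error recursion for the weak algorithm WRPGA(co): with weakness sequence {ℓ_k} ⊆ (0,1] and parameters μ_k > max{1, α^{-1}M₀M^{1-q}}, where at step k one chooses φ_{j_k} ∈ D with |⟨E'(x_{k-1}), φ_{j_k}⟩| ≥ ℓ_k sup_{φ∈D}|⟨E'(x_{k-1}), φ⟩|, the errors e_k := E(x_k) - E(x̄) satisfy e_k ≤ e_{k-1} (1 - ((μ_k - 1)/μ_k)(αμ_k)^{-1/(q-1)} ℓ_k^{q/(q-1)} ‖x̄‖₁^{-q/(q-1)} e_{k-1}^{1/(q-1)}) for k ≥ 2. -/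
private lemma dictNorm1_nonneg {X : Type*} [NormedAddCommGroup X] [NormedSpace ℝ X]
    (D : Set X) (xb : X) : 0 ≤ dictNorm1 D xb := by
  apply Real.sInf_nonneg
  rintro s ⟨c, g, hg, hsum, hhas, rfl⟩
  exact tsum_nonneg fun n => abs_nonneg _

/-- Gradient inequality for convex functions. -/
private lemma grad_ineq {X : Type*} [NormedAddCommGroup X] [NormedSpace ℝ X]
    {E : X → ℝ} (hconv : ConvexOn ℝ Set.univ E) {z : X} {f : X →L[ℝ] ℝ}
    (hd : HasFDerivAt E f z) (y : X) : f (y - z) ≤ E y - E z := by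
  have hgconv : ConvexOn ℝ Set.univ (E ∘ (AffineMap.lineMap z y : ℝ →ᵃ[ℝ] X)) := by
    simpa using hconv.comp_affineMap (AffineMap.lineMap z y)
  have h1 : HasDerivAt (fun s : ℝ => (AffineMap.lineMap z y : ℝ →ᵃ[ℝ] X) s) (y - z) 0 := by
    have h0 : (fun s : ℝ => (AffineMap.lineMap z y : ℝ →ᵃ[ℝ] X) s)
        = fun s : ℝ => s • (y - z) + z := by
      funext s
      simp [AffineMap.lineMap_apply_module']
    rw [h0]
    have h1 : HasDerivAt (fun s : ℝ => s • (y - z)) (y - z) 0 := by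
      simpa using (hasDerivAt_id (0 : ℝ)).smul_const (y - z)
    simpa using h1.add_const z
  have h2 : HasFDerivAt E f ((fun s : ℝ => (AffineMap.lineMap z y : ℝ →ᵃ[ℝ] X) s) 0) := by
    simpa using hd
  have hgd : HasDerivAt (E ∘ (AffineMap.lineMap z y : ℝ →ᵃ[ℝ] X)) (f (y - z)) 0 :=
    h2.comp_hasDerivAt 0 h1
  have := hgconv.le_slope_of_hasDerivAt (Set.mem_univ (0 : ℝ)) (Set.mem_univ (1 : ℝ))
    one_pos hgd
  simpa [slope, Function.comp] using this

set_option maxHeartbeats 1000000 in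
/-- Bound for the dual pairing through the dictionary norm. -/
private lemma dict_bound {X : Type*} [NormedAddCommGroup X] [NormedSpace ℝ X]
    (D : Set X) (xb : X) (f : X →L[ℝ] ℝ) (B : ℝ)
    (h : ∀ g ∈ D, |f g| ≤ B)
    (hrep : {s : ℝ | ∃ (c : ℕ → ℝ) (g : ℕ → X), (∀ n, g n ∈ D) ∧
      Summable (fun n => |c n|) ∧ HasSum (fun n => c n • g n) xb ∧
      s = ∑' n, |c n|}.Nonempty) :
    |f xb| ≤ dictNorm1 D xb * B := by
  have hB0 : 0 ≤ B := by
    obtain ⟨s, c, g, hg, -, -, -⟩ := hrep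
    exact le_trans (abs_nonneg _) (h _ (hg 0))
  have key : ∀ s ∈ {s : ℝ | ∃ (c : ℕ → ℝ) (g : ℕ → X), (∀ n, g n ∈ D) ∧
      Summable (fun n => |c n|) ∧ HasSum (fun n => c n • g n) xb ∧
      s = ∑' n, |c n|}, |f xb| ≤ s * B := by
    rintro s ⟨c, g, hg, hsum, hhas, rfl⟩
    have h1 : HasSum (fun n => c n * f (g n)) (f xb) := by
      have := f.hasSum hhas
      simpa [map_smul, smul_eq_mul] using this
    have h2 : ∀ n, |c n * f (g n)| ≤ |c n| * B := fun n => by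
      rw [abs_mul]
      exact mul_le_mul_of_nonneg_left (h _ (hg n)) (abs_nonneg _)
    have hsum2 : Summable (fun n => |c n| * B) := hsum.mul_right B
    have hsum1 : Summable (fun n => |c n * f (g n)|) :=
      Summable.of_nonneg_of_le (fun n => abs_nonneg _) h2 hsum2
    calc |f xb| = |∑' n, c n * f (g n)| := by rw [h1.tsum_eq]
      _ ≤ ∑' n, |c n * f (g n)| := by
          have h3 : Summable (fun n => ‖c n * f (g n)‖) := by
            simpa only [Real.norm_eq_abs] using hsum1
          have h4 := norm_tsum_le_tsum_norm h3
          simpa only [Real.norm_eq_abs] using h4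
      _ ≤ ∑' n, |c n| * B := Summable.tsum_le_tsum h2 hsum1 hsum2
      _ = (∑' n, |c n|) * B := tsum_mul_right
  rcases eq_or_lt_of_le hB0 with hB | hB
  · obtain ⟨s, hs⟩ := hrep
    have := key s hs
    rw [← hB] at this ⊢
    simpa using this
  · have hinf : |f xb| / B ≤ dictNorm1 D xb :=
      le_csInf hrep fun s hs => (div_le_iff₀ hB).2 (key s hs)
    calc |f xb| = |f xb| / B * B := by field_simp
      _ ≤ dictNorm1 D xb * B := mul_le_mul_of_nonneg_right hinf hB0

set_option maxHeartbeats 1000000 in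
theorem wrpga_error_recursion
    {X : Type*} [NormedAddCommGroup X] [NormedSpace ℝ X] [CompleteSpace X]
    (E : X → ℝ) (E' : X → X →L[ℝ] ℝ) (D : Set X)
    (α M M₀ q : ℝ) (w μ : ℕ → ℝ)
    (hα : 0 < α) (hM : 0 < M) (hM₀ : 0 < M₀) (hq : 1 < q) (hq2 : q ≤ 2)
    (hw : ∀ m, 1 ≤ m → 0 < w m ∧ w m ≤ 1)
    (hμ : ∀ m, 1 ≤ m → μ m > max 1 (α⁻¹ * M₀ * M ^ (1 - q)))
    (hconv : ConvexOn ℝ Set.univ E)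
    (hD : ∀ f ∈ D, ‖f‖ = 1)
    (hdense : Dense (Submodule.span ℝ D : Set X))
    (hΩbdd : Bornology.IsBounded {z : X | E z ≤ E 0})
    (hdiff : ∀ z : X, E z ≤ E 0 → HasFDerivAt E (E' z) z)
    (hbound : ∀ z : X, E z ≤ E 0 → ‖E' z‖ ≤ M₀)
    (hUS : ∀ z : X, E z ≤ E 0 → ∀ z' : X, ‖z - z'‖ ≤ M →
      E z' - E z - E' z (z' - z) ≤ α * ‖z' - z‖ ^ q)
    (xb : X) (hmin : ∀ z : X, E xb ≤ E z)
    (hrep : {s : ℝ | ∃ (c : ℕ → ℝ) (g : ℕ → X), (∀ n, g n ∈ D) ∧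
      Summable (fun n => |c n|) ∧ HasSum (fun n => c n • g n) xb ∧ s = ∑' n, |c n|}.Nonempty)
    -- the iterates of WRPGA(co)
    (x : ℕ → X) (φ : ℕ → X) (lam t : ℕ → ℝ)
    (hx0 : x 0 = 0)
    (hφD : ∀ m, 1 ≤ m → φ m ∈ D)
    (hφweak : ∀ m, 1 ≤ m → ∀ g ∈ D, w m * |E' (x (m - 1)) g| ≤ |E' (x (m - 1)) (φ m)|)
    (hlam : ∀ m, 1 ≤ m → lam m = Real.sign (E' (x (m - 1)) (φ m)) *
      (α * μ m) ^ (-(1 / (q - 1))) * |E' (x (m - 1)) (φ m)| ^ (1 / (q - 1)))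
    (hxm : ∀ m, 1 ≤ m → x m = t m • (x (m - 1) - lam m • φ m))
    (hline : ∀ m, 1 ≤ m → ∀ s : ℝ, E (x m) ≤ E (s • (x (m - 1) - lam m • φ m))) :
    ∀ k, 2 ≤ k →
      E (x k) - E xb ≤ (E (x (k - 1)) - E xb) *
        (1 - ((μ k - 1) / μ k) * (α * μ k) ^ (-(1 / (q - 1))) *
          (w k) ^ (q / (q - 1)) * (dictNorm1 D xb) ^ (-(q / (q - 1))) *
          (E (x (k - 1)) - E xb) ^ (1 / (q - 1))) := by
  intro k hk
  have hk1 : 1 ≤ k := by omega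
  have hk1' : 1 ≤ k - 1 := by omega
  have hq1 : (0:ℝ) < q - 1 := by linarith
  have hq1' : (q:ℝ) - 1 ≠ 0 := ne_of_gt hq1
  have he1pos : 0 < 1 / (q - 1) := by positivity
  have hppos : 0 < q / (q - 1) := by positivity
  have hμk := hμ k hk1
  have hμ1 : 1 < μ k := lt_of_le_of_lt (le_max_left _ _) hμk
  have hμ2 : α⁻¹ * M₀ * M ^ (1 - q) < μ k := lt_of_le_of_lt (le_max_right _ _) hμk
  have hμpos : (0:ℝ) < μ k := by linarith
  have hApos : 0 < α * μ k := by positivity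
  have hwpos : 0 < w k := (hw k hk1).1
  set N := dictNorm1 D xb with hNdef
  set z := x (k - 1) with hz
  set c := E' z (φ k) with hc
  set B := |c| with hB
  have hBnn : 0 ≤ B := hB ▸ abs_nonneg c
  set e := E z - E xb with he
  have hle_e : 0 ≤ e := by
    have := hmin z
    rw [he]; linarith
  have hφnorm : ‖φ k‖ = 1 := hD _ (hφD k hk1)
  -- E z ≤ E 0
  have hEz0 : E z ≤ E 0 := by
    have h := hline (k - 1) hk1' 0
    rw [← hz] at h
    simpa [zero_smul] using h
  have hfd : HasFDerivAt E (E' z) z := hdiff z hEz0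
  set y := z - lam k • φ k with hy
  have hExk : E (x k) ≤ E y := by
    have h := hline k hk1 1
    rw [← hz] at h
    rw [hy]
    simpa [one_smul] using h
  -- rewriting the step-size formula
  have hlameq : lam k = Real.sign c * (α * μ k) ^ (-(1 / (q - 1))) * B ^ (1 / (q - 1)) := by
    have h := hlam k hk1
    rw [← hz, ← hc, ← hB] at h
    exact h
  have hsign : Real.sign c * c = B := by
    rw [hB]
    rcases lt_trichotomy c 0 with h | h | h
    · rw [Real.sign_of_neg h, abs_of_neg h]; ring
    · simp [h]
    · rw [Real.sign_of_pos h, abs_of_pos h]; ring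
  -- lam k * c
  have hlc : lam k * c = (α * μ k) ^ (-(1 / (q - 1))) * B ^ (q / (q - 1)) := by
    rw [hlameq]
    calc Real.sign c * (α * μ k) ^ (-(1 / (q - 1))) * B ^ (1 / (q - 1)) * c
        = (α * μ k) ^ (-(1 / (q - 1))) * (B ^ (1 / (q - 1)) * (Real.sign c * c)) := by ring
      _ = (α * μ k) ^ (-(1 / (q - 1))) * (B ^ (1 / (q - 1)) * B) := by rw [hsign]
      _ = (α * μ k) ^ (-(1 / (q - 1))) * B ^ (q / (q - 1)) := by
          congr 1
          rcases eq_or_lt_of_le hBnn with h0 | h0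
          · rw [← h0, Real.zero_rpow (ne_of_gt he1pos), Real.zero_rpow (ne_of_gt hppos),
              zero_mul]
          · have hqe : q / (q - 1) = 1 / (q - 1) + 1 := by field_simp; ring
            rw [hqe, Real.rpow_add h0, Real.rpow_one]
  -- |lam k|
  have habs : |lam k| = (α * μ k) ^ (-(1 / (q - 1))) * B ^ (1 / (q - 1)) := by
    rw [hlameq, abs_mul, abs_mul,
      abs_of_nonneg (Real.rpow_nonneg hApos.le _), abs_of_nonneg (Real.rpow_nonneg hBnn _)]
    rcases eq_or_ne c 0 with h | h
    · have hB0 : B = 0 := by rw [hB, h, abs_zero]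
      rw [hB0, Real.zero_rpow (ne_of_gt he1pos), h, Real.sign_zero]
      simp
    · rcases Real.sign_apply_eq_of_ne_zero c h with h' | h' <;> rw [h'] <;> norm_num
  -- |lam k| ≤ M
  have hBle : B ≤ M₀ := by
    have h1 : |E' z (φ k)| ≤ ‖E' z‖ * ‖φ k‖ := (E' z).le_opNorm (φ k)
    rw [hφnorm, mul_one] at h1
    rw [hB, hc]
    exact h1.trans (hbound z hEz0)
  have hM1q : (0:ℝ) < M ^ (1 - q) := Real.rpow_pos_of_pos hM _
  have hlamM : |lam k| ≤ M := by
    have hkey : M₀ * M ^ (1 - q) < α * μ k := by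
      have h1 : α * (α⁻¹ * M₀ * M ^ (1 - q)) < α * μ k := by
        exact mul_lt_mul_of_pos_left hμ2 hα
      calc M₀ * M ^ (1 - q) = α * (α⁻¹ * M₀ * M ^ (1 - q)) := by
            field_simp
          _ < α * μ k := h1
    have h1 : (α * μ k) ^ (-(1 / (q - 1))) ≤ (M₀ * M ^ (1 - q)) ^ (-(1 / (q - 1))) :=
      Real.rpow_le_rpow_of_nonpos (by positivity) hkey.le (by linarith)
    have h2 : B ^ (1 / (q - 1)) ≤ M₀ ^ (1 / (q - 1)) :=
      Real.rpow_le_rpow hBnn hBle he1pos.le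
    have h3 : (M₀ * M ^ (1 - q)) ^ (-(1 / (q - 1))) * M₀ ^ (1 / (q - 1)) = M := by
      rw [Real.mul_rpow hM₀.le hM1q.le, ← Real.rpow_mul hM.le]
      have hexp : (1 - q) * (-(1 / (q - 1))) = 1 := by field_simp; ring
      rw [hexp, Real.rpow_one]
      have : M₀ ^ (-(1 / (q - 1))) * M₀ ^ (1 / (q - 1)) = 1 := by
        rw [← Real.rpow_add hM₀]
        simp
      calc M₀ ^ (-(1 / (q - 1))) * M * M₀ ^ (1 / (q - 1))
          = M₀ ^ (-(1 / (q - 1))) * M₀ ^ (1 / (q - 1)) * M := by ring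
        _ = M := by rw [this, one_mul]
    calc |lam k| = (α * μ k) ^ (-(1 / (q - 1))) * B ^ (1 / (q - 1)) := habs
      _ ≤ (M₀ * M ^ (1 - q)) ^ (-(1 / (q - 1))) * M₀ ^ (1 / (q - 1)) :=
          mul_le_mul h1 h2 (Real.rpow_nonneg hBnn _) (Real.rpow_nonneg (by positivity) _)
      _ = M := h3
  -- the uniform smoothness step
  have hzy : ‖z - y‖ = |lam k| := by
    rw [hy]
    simp [norm_smul, hφnorm, Real.norm_eq_abs]
  have hyz : ‖y - z‖ = |lam k| := by rw [norm_sub_rev]; exact hzy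
  have hUSk := hUS z hEz0 y (by rw [hzy]; exact hlamM)
  have hfy : E' z (y - z) = -(lam k * c) := by
    have : y - z = -(lam k • φ k) := by rw [hy]; abel
    rw [this, map_neg, map_smul, smul_eq_mul, hc]
  have hlq : α * |lam k| ^ q =
      (1 / μ k) * ((α * μ k) ^ (-(1 / (q - 1))) * B ^ (q / (q - 1))) := by
    rw [habs, Real.mul_rpow (Real.rpow_nonneg hApos.le _) (Real.rpow_nonneg hBnn _),
      ← Real.rpow_mul hApos.le, ← Real.rpow_mul hBnn]
    have hB2 : 1 / (q - 1) * q = q / (q - 1) := by field_simp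
    have hA2 : -(1 / (q - 1)) * q = -(1 / (q - 1)) + -1 := by field_simp; ring
    rw [hB2, hA2, Real.rpow_add hApos, Real.rpow_neg_one]
    have hαμ : α * (α * μ k)⁻¹ = 1 / μ k := by
      field_simp
    calc α * ((α * μ k) ^ (-(1 / (q - 1))) * (α * μ k)⁻¹ * B ^ (q / (q - 1)))
        = (α * (α * μ k)⁻¹) * ((α * μ k) ^ (-(1 / (q - 1))) * B ^ (q / (q - 1))) := by ring
      _ = (1 / μ k) * ((α * μ k) ^ (-(1 / (q - 1))) * B ^ (q / (q - 1))) := by rw [hαμ]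
  have hEy : E y ≤ E z -
      ((μ k - 1) / μ k) * ((α * μ k) ^ (-(1 / (q - 1))) * B ^ (q / (q - 1))) := by
    have h := hUSk
    rw [hfy, hyz, hlq, hlc] at h
    have hid : ((μ k - 1) / μ k) * ((α * μ k) ^ (-(1 / (q - 1))) * B ^ (q / (q - 1)))
        = ((α * μ k) ^ (-(1 / (q - 1))) * B ^ (q / (q - 1)))
          - (1 / μ k) * ((α * μ k) ^ (-(1 / (q - 1))) * B ^ (q / (q - 1))) := by
      field_simp
    linarith
  have hCnn : (0:ℝ) ≤ (μ k - 1) / μ k := div_nonneg (by linarith) hμpos.le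
  have hTnn : (0:ℝ) ≤ (α * μ k) ^ (-(1 / (q - 1))) * B ^ (q / (q - 1)) :=
    mul_nonneg (Real.rpow_nonneg hApos.le _) (Real.rpow_nonneg hBnn _)
  have hNnn : 0 ≤ N := hNdef ▸ dictNorm1_nonneg D xb
  rcases eq_or_lt_of_le hNnn with hN | hN
  · -- degenerate case: dictionary norm is zero
    rw [← hN, Real.zero_rpow (neg_ne_zero.mpr (ne_of_gt hppos))]
    have : E (x k) - E xb ≤ e := by
      have := mul_nonneg hCnn hTnn
      rw [he]; linarith
    calc E (x k) - E xb ≤ e := this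
      _ = e * (1 - ((μ k - 1) / μ k) * (α * μ k) ^ (-(1 / (q - 1))) *
          (w k) ^ (q / (q - 1)) * 0 * e ^ (1 / (q - 1))) := by ring
  · -- main case
    -- derivative vanishes along the previous direction
    have hfz0 : E' z z = 0 := by
      set v := x (k - 1 - 1) - lam (k - 1) • φ (k - 1) with hv
      have hzv : z = t (k - 1) • v := by rw [hz]; exact hxm (k - 1) hk1'
      have hmin' : ∀ s : ℝ, E z ≤ E (s • v) := fun s => by
        rw [hz]; exact hline (k - 1) hk1' s
      have h1 : HasDerivAt (fun s : ℝ => s • v) v (t (k - 1)) := by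
        simpa using (hasDerivAt_id (t (k - 1))).smul_const v
      have h2 : HasFDerivAt E (E' z) ((fun s : ℝ => s • v) (t (k - 1))) := by
        simpa [← hzv] using hfd
      have hcur : HasDerivAt (fun s : ℝ => E (s • v)) (E' z v) (t (k - 1)) := by
        exact h2.comp_hasDerivAt (t (k - 1)) h1
      have hlocal : IsLocalMin (fun s : ℝ => E (s • v)) (t (k - 1)) := by
        apply Filter.Eventually.of_forall
        intro s
        simpa [← hzv] using hmin' s
      have hvd : E' z v = 0 := hlocal.hasDerivAt_eq_zero hcur
      calc E' z z = E' z (t (k - 1) • v) := by rw [← hzv]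
        _ = t (k - 1) * E' z v := by rw [map_smul, smul_eq_mul]
        _ = 0 := by rw [hvd, mul_zero]
    -- gradient inequality
    have hgrad := grad_ineq hconv hfd xb
    have he_le : e ≤ |E' z xb| := by
      have h1 : E' z (xb - z) = E' z xb - E' z z := map_sub _ _ _
      rw [h1, hfz0, sub_zero] at hgrad
      have : -(E' z xb) ≤ |E' z xb| := neg_le_abs _
      rw [he]; linarith
    -- dictionary bound
    have hdict : |E' z xb| ≤ N * (B / w k) := by
      rw [hNdef]
      apply dict_bound D xb (E' z) (B / w k) _ hrep
      intro g hg
      have h := hφweak k hk1 g hg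
      rw [← hz, ← hc, ← hB] at h
      rw [le_div_iff₀ hwpos]
      linarith [h]
    have hBge : w k * e / N ≤ B := by
      rw [div_le_iff₀ hN]
      have h1 : e ≤ N * (B / w k) := he_le.trans hdict
      calc w k * e ≤ w k * (N * (B / w k)) := mul_le_mul_of_nonneg_left h1 hwpos.le
        _ = B * N := by
            field_simp
    rcases eq_or_lt_of_le hle_e with he0 | hepos
    · -- error already zero
      rw [← he0, zero_mul]
      have := mul_nonneg hCnn hTnn
      have h0 : E z - E xb = 0 := by rw [← he]; exact he0.symm
      linarith
    · have h1 : (w k * e / N) ^ (q / (q - 1)) ≤ B ^ (q / (q - 1)) :=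
        Real.rpow_le_rpow (by positivity) hBge hppos.le
      have hep : e ^ (q / (q - 1)) = e * e ^ (1 / (q - 1)) := by
        have hq3 : q / (q - 1) = 1 + 1 / (q - 1) := by field_simp; ring
        rw [hq3, Real.rpow_add hepos, Real.rpow_one]
      have hsplit : (w k * e / N) ^ (q / (q - 1)) =
          (w k) ^ (q / (q - 1)) * (N ^ (-(q / (q - 1))) * (e * e ^ (1 / (q - 1)))) := by
        rw [Real.div_rpow (by positivity) hN.le,
          Real.mul_rpow hwpos.le hle_e, Real.rpow_neg hN.le, hep]
        field_simp
      have h2 : (w k) ^ (q / (q - 1)) * (N ^ (-(q / (q - 1))) * (e * e ^ (1 / (q - 1))))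
          ≤ B ^ (q / (q - 1)) := by rw [← hsplit]; exact h1
      have h3 : ((μ k - 1) / μ k) * ((α * μ k) ^ (-(1 / (q - 1))) *
            ((w k) ^ (q / (q - 1)) * (N ^ (-(q / (q - 1))) * (e * e ^ (1 / (q - 1))))))
          ≤ ((μ k - 1) / μ k) * ((α * μ k) ^ (-(1 / (q - 1))) * B ^ (q / (q - 1))) := by
        apply mul_le_mul_of_nonneg_left _ hCnn
        exact mul_le_mul_of_nonneg_left h2 (Real.rpow_nonneg hApos.le _)
      have hexp : e * (1 - ((μ k - 1) / μ k) * (α * μ k) ^ (-(1 / (q - 1))) *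
            (w k) ^ (q / (q - 1)) * N ^ (-(q / (q - 1))) * e ^ (1 / (q - 1)))
          = e - ((μ k - 1) / μ k) * ((α * μ k) ^ (-(1 / (q - 1))) *
            ((w k) ^ (q / (q - 1)) * (N ^ (-(q / (q - 1))) * (e * e ^ (1 / (q - 1)))))) := by
        ring
      rw [← he] at *
      rw [hexp]
      linarith [hExk, hEy, h3]
end

section
/- Convergence rate of WRPGA(co): under Condition 0 and the US condition, the iterates of the weak rescaled pure greedy algorithm with weakness sequence {ℓ_k} ⊆ (0,1] and parameters μ_k > max{1, α^{-1}M₀M^{1-q}} satisfy, for k ≥ 2, E(x_k) - E(x̄) ≤ α‖x̄‖₁^q ( (α‖x̄‖₁^q/(E(0)-E(x̄)))^{1/(q-1)} + Σ_{j=2}^k (μ_j - 1)(ℓ_j/μ_j)^{q/(q-1)} )^{1-q}. -/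
lemma wrpga_rate_aux (r A : ℝ) (hr0 : 0 < r) (hr1 : 1 ≤ 1/r) (hA : 0 < A)
    (a c : ℕ → ℝ) (ha : ∀ m, 0 ≤ a m) (ha1 : a 1 ≤ a 0) (ha0 : 0 < a 0)
    (hc : ∀ j, 2 ≤ j → 0 < c j)
    (hrec : ∀ m, 2 ≤ m → a m ≤ a (m-1) - c m * (a (m-1)/A)^(1/r) * a (m-1)) :
    ∀ k, 1 ≤ k →
      a k ^ (1/r) * ((A/a 0)^(1/r) + ∑ j ∈ Finset.Icc 2 k, c j) ≤ A^(1/r) := by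
  have hrpos : 0 < 1/r := by positivity
  intro k hk
  induction k, hk using Nat.le_induction with
  | base =>
    have : Finset.Icc 2 1 = (∅ : Finset ℕ) := by decide
    rw [this, Finset.sum_empty, add_zero]
    have h1 : a 1 ^ (1/r) ≤ a 0 ^ (1/r) := Real.rpow_le_rpow (ha 1) ha1 hrpos.le
    have h2 : (A / a 0) ^ (1/r) = A ^ (1/r) / a 0 ^ (1/r) := Real.div_rpow hA.le (ha 0) _
    rw [h2]
    calc a 1 ^ (1/r) * (A ^ (1/r) / a 0 ^ (1/r))
        ≤ a 0 ^ (1/r) * (A ^ (1/r) / a 0 ^ (1/r)) := by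
          apply mul_le_mul_of_nonneg_right h1 (by positivity)
      _ = A ^ (1/r) := by field_simp
  | succ k hk ih =>
    set B := (A / a 0)^(1/r) with hB
    have hBpos : 0 < B := by
      have : 0 < A / a 0 := by positivity
      positivity
    have hS : 0 ≤ ∑ j ∈ Finset.Icc 2 k, c j :=
      Finset.sum_nonneg fun j hj => (hc j (Finset.mem_Icc.mp hj).1).le
    have hsum : ∑ j ∈ Finset.Icc 2 (k+1), c j = (∑ j ∈ Finset.Icc 2 k, c j) + c (k+1) :=
      Finset.sum_Icc_succ_top (by omega) _
    have hrec' := hrec (k+1) (by omega)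
    simp only [Nat.add_sub_cancel] at hrec'
    rw [hsum]
    have hcpos := hc (k+1) (by omega)
    rcases eq_or_lt_of_le (ha k) with hz | hapos
    · -- a k = 0
      have h0 : a (k+1) ≤ 0 := by
        rw [← hz] at hrec'
        simpa using hrec'
      have h0' : a (k+1) = 0 := le_antisymm h0 (ha (k+1))
      rw [h0', Real.zero_rpow (by positivity), zero_mul]
      positivity
    · -- a k > 0
      set xx := c (k+1) * (a k / A)^(1/r) with hxx
      have hxpos : 0 < xx := by
        have : 0 < a k / A := by positivity
        positivity
      have hrec2 : a (k+1) ≤ a k * (1 - xx) := by rw [hxx]; nlinarith [hrec']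
      rcases le_or_gt 1 xx with hge | hlt
      · have h0 : a (k+1) ≤ 0 := le_trans hrec2 (by nlinarith)
        have h0' : a (k+1) = 0 := le_antisymm h0 (ha (k+1))
        rw [h0', Real.zero_rpow (by positivity), zero_mul]
        positivity
      · set y := (A / a k)^(1/r) with hy
        have hypos : 0 < y := by
          have : 0 < A / a k := by positivity
          positivity
        have hxy : xx = c (k+1) * y⁻¹ := by
          rw [hxx, hy, ← Real.inv_rpow (by positivity), inv_div]
        have hyval : y = A^(1/r) / a k ^ (1/r) := Real.div_rpow hA.le hapos.le _
        have hIH : B + ∑ j ∈ Finset.Icc 2 k, c j ≤ y := by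
          rw [hyval, le_div_iff₀ (by positivity), mul_comm]
          exact ih
        have hup : a (k+1) ^ (1/r) ≤ a k ^ (1/r) * (1-xx)^(1/r) := by
          calc a (k+1) ^ (1/r) ≤ (a k * (1-xx)) ^ (1/r) :=
                Real.rpow_le_rpow (ha _) hrec2 hrpos.le
            _ = a k ^ (1/r) * (1-xx)^(1/r) := Real.mul_rpow hapos.le (by linarith)
        have hbern : (1-xx)^(1/r) * (1 + xx) ≤ 1 := by
          have h1 : (1-xx)^(1/r) ≤ (1-xx)^(1:ℝ) :=
            Real.rpow_le_rpow_of_exponent_ge (by linarith) (by linarith) hr1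
          rw [Real.rpow_one] at h1
          nlinarith [Real.rpow_nonneg (by linarith : (0:ℝ) ≤ 1 - xx) (1/r)]
        have hkey : (1-xx)^(1/r) * (y + c (k+1)) ≤ y := by
          have : y + c (k+1) = y * (1 + xx) := by
            rw [hxy]; field_simp
          rw [this]
          calc (1-xx)^(1/r) * (y * (1+xx)) = ((1-xx)^(1/r) * (1+xx)) * y := by ring
            _ ≤ 1 * y := mul_le_mul_of_nonneg_right hbern hypos.le
            _ = y := one_mul y
        calc a (k+1) ^ (1/r) * (B + ((∑ j ∈ Finset.Icc 2 k, c j) + c (k+1)))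
            ≤ (a k ^ (1/r) * (1-xx)^(1/r)) * (y + c (k+1)) := by
              have hnn1 : 0 ≤ a (k+1) ^ (1/r) := Real.rpow_nonneg (ha _) _
              have hnn2 : 0 ≤ a k ^ (1/r) * (1-xx)^(1/r) := by
                have := Real.rpow_nonneg (by linarith : (0:ℝ) ≤ 1 - xx) (1/r)
                positivity
              exact mul_le_mul hup (by linarith) (by positivity) hnn2
          _ = a k ^ (1/r) * ((1-xx)^(1/r) * (y + c (k+1))) := by ring
          _ ≤ a k ^ (1/r) * y :=
              mul_le_mul_of_nonneg_left hkey (Real.rpow_nonneg hapos.le _)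
          _ = A ^ (1/r) := by rw [hyval]; field_simp

set_option maxHeartbeats 1000000 in
theorem wrpga_convergence_rate
    {X : Type*} [NormedAddCommGroup X] [NormedSpace ℝ X] [CompleteSpace X]
    (E : X → ℝ) (E' : X → X →L[ℝ] ℝ) (D : Set X)
    (α M M₀ q : ℝ) (w μ : ℕ → ℝ)
    (hα : 0 < α) (hM : 0 < M) (hM₀ : 0 < M₀) (hq : 1 < q) (hq2 : q ≤ 2)
    (hw : ∀ m, 1 ≤ m → 0 < w m ∧ w m ≤ 1)
    (hμ : ∀ m, 1 ≤ m → μ m > max 1 (α⁻¹ * M₀ * M ^ (1 - q)))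
    (hconv : ConvexOn ℝ Set.univ E)
    (hD : ∀ f ∈ D, ‖f‖ = 1)
    (hdense : Dense (Submodule.span ℝ D : Set X))
    (hΩbdd : Bornology.IsBounded {z : X | E z ≤ E 0})
    (hdiff : ∀ z : X, E z ≤ E 0 → HasFDerivAt E (E' z) z)
    (hbound : ∀ z : X, E z ≤ E 0 → ‖E' z‖ ≤ M₀)
    (hUS : ∀ z : X, E z ≤ E 0 → ∀ z' : X, ‖z - z'‖ ≤ M →
      E z' - E z - E' z (z' - z) ≤ α * ‖z' - z‖ ^ q)
    (xb : X) (hmin : ∀ z : X, E xb ≤ E z)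
    (hrep : {s : ℝ | ∃ (c : ℕ → ℝ) (g : ℕ → X), (∀ n, g n ∈ D) ∧
      Summable (fun n => |c n|) ∧ HasSum (fun n => c n • g n) xb ∧ s = ∑' n, |c n|}.Nonempty)
    -- the iterates of WRPGA(co)
    (x : ℕ → X) (φ : ℕ → X) (lam t : ℕ → ℝ)
    (hx0 : x 0 = 0)
    (hφD : ∀ m, 1 ≤ m → φ m ∈ D)
    (hφweak : ∀ m, 1 ≤ m → ∀ g ∈ D, w m * |E' (x (m - 1)) g| ≤ |E' (x (m - 1)) (φ m)|)
    (hlam : ∀ m, 1 ≤ m → lam m = Real.sign (E' (x (m - 1)) (φ m)) *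
      (α * μ m) ^ (-(1 / (q - 1))) * |E' (x (m - 1)) (φ m)| ^ (1 / (q - 1)))
    (hxm : ∀ m, 1 ≤ m → x m = t m • (x (m - 1) - lam m • φ m))
    (hline : ∀ m, 1 ≤ m → ∀ s : ℝ, E (x m) ≤ E (s • (x (m - 1) - lam m • φ m))) :
    ∀ k, 2 ≤ k →
      E (x k) - E xb ≤ α * (dictNorm1 D xb) ^ q *
        ((α * (dictNorm1 D xb) ^ q / (E 0 - E xb)) ^ (1 / (q - 1)) +
          ∑ j ∈ Finset.Icc 2 k, (μ j - 1) * (w j / μ j) ^ (q / (q - 1))) ^ (1 - q) := by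
  have hq1 : (0:ℝ) < q - 1 := by linarith
  have hq1' : q - 1 ≠ 0 := ne_of_gt hq1
  have hrpos : (0:ℝ) < 1/(q-1) := by positivity
  have hrge : (1:ℝ) ≤ 1/(q-1) := by rw [le_div_iff₀ hq1]; linarith
  set N := dictNorm1 D xb with hNdef
  have hN0 : 0 ≤ N := by
    rw [hNdef, dictNorm1]
    apply Real.sInf_nonneg
    rintro s ⟨c, g, -, -, -, rfl⟩
    exact tsum_nonneg fun n => abs_nonneg _
  have ha_nonneg : ∀ m, 0 ≤ E (x m) - E xb := fun m => by linarith [hmin (x m)]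
  -- iterates stay in Ω
  have hE0 : ∀ m, 1 ≤ m → E (x m) ≤ E 0 := by
    intro m hm
    have := hline m hm 0
    simpa [zero_smul] using this
  -- derivative orthogonality
  have horth : ∀ m, 1 ≤ m → E' (x m) (x m) = 0 := by
    intro m hm
    set v := x (m-1) - lam m • φ m with hvdef
    have hxmv : x m = t m • v := hxm m hm
    have hF : HasFDerivAt E (E' (x m)) (x m) := hdiff _ (hE0 m hm)
    have hF' : HasFDerivAt E (E' (x m)) (t m • v) := hxmv ▸ hF
    have hg : HasDerivAt (fun s : ℝ => s • v) v (t m) := by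
      simpa using (hasDerivAt_id (t m)).smul_const v
    have hψ : HasDerivAt (fun s : ℝ => E (s • v)) (E' (x m) v) (t m) :=
      hF'.comp_hasDerivAt (t m) hg
    have hminψ : IsLocalMin (fun s : ℝ => E (s • v)) (t m) :=
      Filter.Eventually.of_forall (fun s => by
        show E (t m • v) ≤ E (s • v)
        rw [← hxmv]; exact hline m hm s)
    have h0 : E' (x m) v = 0 := hminψ.hasDerivAt_eq_zero hψ
    rw [hxmv] at h0 ⊢
    rw [map_smul, h0, smul_zero]
  -- gradient inequality from convexity
  have grad_ineq : ∀ z, E z ≤ E 0 → ∀ y, E' z (y - z) ≤ E y - E z := by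
    intro z hz y
    have hg : HasDerivAt (fun s : ℝ => z + s • (y - z)) (y - z) 0 := by
      simpa using ((hasDerivAt_id (0:ℝ)).smul_const (y - z)).const_add z
    have hF' : HasFDerivAt E (E' z) ((fun s : ℝ => z + s • (y - z)) 0) := by
      simpa using hdiff z hz
    have hψ : HasDerivAt (fun s : ℝ => E (z + s • (y - z))) (E' z (y - z)) 0 :=
      hF'.comp_hasDerivAt 0 hg
    rw [hasDerivAt_iff_tendsto_slope] at hψ
    have hψ' : Filter.Tendsto (slope (fun s : ℝ => E (z + s • (y - z))) 0)
        (nhdsWithin 0 (Set.Ioi 0)) (nhds (E' z (y - z))) :=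
      hψ.mono_left (nhdsWithin_mono 0 (fun u hu => ne_of_gt hu))
    apply le_of_tendsto hψ'
    filter_upwards [Ioo_mem_nhdsGT_of_mem (Set.mem_Ico.mpr ⟨le_refl (0:ℝ), zero_lt_one⟩)]
      with u hu
    have hu0 : (0:ℝ) < u := hu.1
    have hu1 : u < 1 := hu.2
    have hpt : z + u • (y - z) = (1 - u) • z + u • y := by
      rw [sub_smul, one_smul, smul_sub]; abel
    have hcv := hconv.2 (Set.mem_univ z) (Set.mem_univ y)
      (by linarith : (0:ℝ) ≤ 1 - u) hu0.le (by ring)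
    rw [← hpt] at hcv
    rw [slope_def_field]
    simp only [zero_smul, add_zero, sub_zero]
    rw [div_le_iff₀ hu0]
    simp only [smul_eq_mul] at hcv
    nlinarith [hcv]
  -- dictionary seminorm bound
  have dict_bound : ∀ (L : X →L[ℝ] ℝ) (B : ℝ), 0 ≤ B → (∀ g ∈ D, |L g| ≤ B) →
      |L xb| ≤ N * B := by
    intro L B hB hLB
    have key : ∀ s ∈ {s : ℝ | ∃ (c : ℕ → ℝ) (g : ℕ → X), (∀ n, g n ∈ D) ∧
        Summable (fun n => |c n|) ∧ HasSum (fun n => c n • g n) xb ∧ s = ∑' n, |c n|},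
        |L xb| ≤ s * B := by
      rintro s ⟨c, g, hg, hsum, hhas, rfl⟩
      have h2 : HasSum (fun n => L (c n • g n)) (L xb) := hhas.mapL L
      have h2' : HasSum (fun n => c n * L (g n)) (L xb) := by
        simpa [map_smul, smul_eq_mul] using h2
      have hbd : ∀ n, |c n * L (g n)| ≤ |c n| * B := by
        intro n
        rw [abs_mul]
        exact mul_le_mul_of_nonneg_left (hLB _ (hg n)) (abs_nonneg _)
      have hsum2 : Summable (fun n => |c n| * B) := hsum.mul_right B
      have hsum1 : Summable (fun n => |c n * L (g n)|) :=
        Summable.of_nonneg_of_le (fun n => abs_nonneg _) hbd hsum2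
      calc |L xb| = |∑' n, c n * L (g n)| := by rw [h2'.tsum_eq]
        _ ≤ ∑' n, |c n * L (g n)| := by
            have := norm_tsum_le_tsum_norm (f := fun n => c n * L (g n))
              (by simpa only [Real.norm_eq_abs] using hsum1)
            simpa only [Real.norm_eq_abs] using this
        _ ≤ ∑' n, |c n| * B := Summable.tsum_le_tsum hbd hsum1 hsum2
        _ = (∑' n, |c n|) * B := tsum_mul_right
    rcases eq_or_lt_of_le hB with hB0 | hBpos
    · obtain ⟨s, hs⟩ := hrep
      have := key s hs
      rw [← hB0] at this ⊢
      simpa using this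
    · rw [← div_le_iff₀ hBpos]
      have : ∀ s ∈ {s : ℝ | ∃ (c : ℕ → ℝ) (g : ℕ → X), (∀ n, g n ∈ D) ∧
          Summable (fun n => |c n|) ∧ HasSum (fun n => c n • g n) xb ∧ s = ∑' n, |c n|},
          |L xb| / B ≤ s := by
        intro s hs
        rw [div_le_iff₀ hBpos]
        exact key s hs
      rw [hNdef, dictNorm1]
      exact le_csInf hrep this
  -- R1 : weakness / duality bound
  have R1 : ∀ m, 2 ≤ m → w m * (E (x (m-1)) - E xb) ≤ N * |E' (x (m-1)) (φ m)| := by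
    intro m hm
    have hm1 : 1 ≤ m - 1 := by omega
    have hm' : 1 ≤ m := by omega
    have hz : E (x (m-1)) ≤ E 0 := hE0 _ hm1
    set L := E' (x (m-1)) with hL
    have hwm := (hw m hm').1
    have hLb : ∀ g ∈ D, |L g| ≤ |L (φ m)| / w m := by
      intro g hg
      rw [le_div_iff₀ hwm]
      have := hφweak m hm' g hg
      linarith
    have hdb : |L xb| ≤ N * (|L (φ m)| / w m) :=
      dict_bound L (|L (φ m)| / w m) (by positivity) hLb
    have hgi : L (xb - x (m-1)) ≤ E xb - E (x (m-1)) := grad_ineq (x (m-1)) hz xb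
    have ho : L (x (m-1)) = 0 := horth (m-1) hm1
    have hsub : L (xb - x (m-1)) = L xb - L (x (m-1)) := map_sub L _ _
    have h1 : E (x (m-1)) - E xb ≤ - L xb := by
      rw [hsub, ho, sub_zero] at hgi; linarith
    have h2 : E (x (m-1)) - E xb ≤ N * (|L (φ m)| / w m) := by
      calc E (x (m-1)) - E xb ≤ - L xb := h1
        _ ≤ |L xb| := neg_le_abs _
        _ ≤ N * (|L (φ m)| / w m) := hdb
    calc w m * (E (x (m-1)) - E xb) ≤ w m * (N * (|L (φ m)| / w m)) :=
          mul_le_mul_of_nonneg_left h2 hwm.le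
      _ = N * |L (φ m)| := by field_simp
  -- R2 : energy decrease
  have R2 : ∀ m, 2 ≤ m → E (x m) ≤ E (x (m-1)) -
      (μ m - 1) * (μ m)^(-(q/(q-1))) * α^(-(1/(q-1))) * |E' (x (m-1)) (φ m)|^(q/(q-1)) := by
    intro m hm
    have hm1 : 1 ≤ m - 1 := by omega
    have hm' : 1 ≤ m := by omega
    have hz : E (x (m-1)) ≤ E 0 := hE0 _ hm1
    set z := x (m-1) with hzdef
    set b := E' z (φ m) with hbdef
    have hμm := hμ m hm'
    have hμ1 : 1 < μ m := lt_of_le_of_lt (le_max_left _ _) hμm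
    have hμpos : 0 < μ m := by linarith
    have hαμ : 0 < α * μ m := by positivity
    have hlm : lam m = Real.sign b * (α * μ m) ^ (-(1/(q-1))) * |b| ^ (1/(q-1)) := hlam m hm'
    have hφ1 : ‖φ m‖ = 1 := hD _ (hφD m hm')
    have hbabs : |b| ≤ M₀ := by
      calc |b| = ‖E' z (φ m)‖ := (Real.norm_eq_abs _).symm
        _ ≤ ‖E' z‖ * ‖φ m‖ := (E' z).le_opNorm _
        _ = ‖E' z‖ := by rw [hφ1, mul_one]
        _ ≤ M₀ := hbound z hz
    have habslm : |lam m| = (α * μ m) ^ (-(1/(q-1))) * |b| ^ (1/(q-1)) := by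
      rcases lt_trichotomy b 0 with hbneg | hb0 | hbpos
      · rw [hlm, Real.sign_of_neg hbneg]
        rw [abs_mul, abs_mul]
        rw [abs_of_nonneg (Real.rpow_nonneg hαμ.le _),
          abs_of_nonneg (Real.rpow_nonneg (abs_nonneg b) _)]
        norm_num
      · rw [hlm, hb0, Real.sign_zero, abs_zero, zero_mul, zero_mul, abs_zero,
          Real.zero_rpow (ne_of_gt hrpos), mul_zero]
      · rw [hlm, Real.sign_of_pos hbpos]
        rw [abs_mul, abs_mul]
        rw [abs_of_nonneg (Real.rpow_nonneg hαμ.le _),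
          abs_of_nonneg (Real.rpow_nonneg (abs_nonneg b) _)]
        norm_num
    -- |lam m| ≤ M
    have hlmM : |lam m| ≤ M := by
      have hMr : (0:ℝ) < M ^ (q-1) := Real.rpow_pos_of_pos hM _
      have hstep : M₀ / (α * μ m) ≤ M ^ (q-1) := by
        have h1 : α⁻¹ * M₀ * M ^ (1-q) < μ m := lt_of_le_of_lt (le_max_right _ _) hμm
        have hM1q : M ^ (1-q) = (M ^ (q-1))⁻¹ := by
          rw [show (1-q : ℝ) = -(q-1) by ring, Real.rpow_neg hM.le]
        rw [hM1q] at h1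
        have key := mul_lt_mul_of_pos_left h1 (mul_pos hα hMr)
        have hid : α * M ^ (q-1) * (α⁻¹ * M₀ * (M ^ (q-1))⁻¹) = M₀ := by
          field_simp
        rw [hid] at key
        rw [div_le_iff₀ hαμ]
        nlinarith [key]
      calc |lam m| = (α * μ m) ^ (-(1/(q-1))) * |b| ^ (1/(q-1)) := habslm
        _ ≤ (α * μ m) ^ (-(1/(q-1))) * M₀ ^ (1/(q-1)) := by
            apply mul_le_mul_of_nonneg_left _ (Real.rpow_nonneg hαμ.le _)
            exact Real.rpow_le_rpow (abs_nonneg _) hbabs hrpos.le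
        _ = (M₀ / (α * μ m)) ^ (1/(q-1)) := by
            rw [Real.div_rpow hM₀.le hαμ.le, Real.rpow_neg hαμ.le, div_eq_mul_inv]
            ring
        _ ≤ (M ^ (q-1)) ^ (1/(q-1)) := Real.rpow_le_rpow (by positivity) hstep hrpos.le
        _ = M := by
            rw [← Real.rpow_mul hM.le]
            rw [show (q-1) * (1/(q-1)) = 1 by field_simp]
            exact Real.rpow_one M
    -- the US bound
    have hnorm : ‖z - (z - lam m • φ m)‖ = |lam m| := by
      rw [sub_sub_cancel, norm_smul, hφ1, mul_one, Real.norm_eq_abs]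
    have hUSm := hUS z hz (z - lam m • φ m) (by rw [hnorm]; exact hlmM)
    have hdiffpt : (z - lam m • φ m) - z = -(lam m • φ m) := by abel
    have hEder : E' z ((z - lam m • φ m) - z) = -(lam m * b) := by
      rw [hdiffpt, map_neg, map_smul, smul_eq_mul]
    have hnorm2 : ‖(z - lam m • φ m) - z‖ = |lam m| := by
      rw [hdiffpt, norm_neg, norm_smul, hφ1, mul_one, Real.norm_eq_abs]
    rw [hEder, hnorm2] at hUSm
    have hstep1 : E (x m) ≤ E (z - lam m • φ m) := by
      have := hline m hm' 1
      simpa [one_smul] using this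
    -- key algebraic identity
    have hkey : - (lam m * b) + α * |lam m| ^ q =
        - ((μ m - 1) * (μ m)^(-(q/(q-1))) * α^(-(1/(q-1))) * |b|^(q/(q-1))) := by
      rcases eq_or_ne b 0 with hb0 | hbne
      · rw [hlm, hb0]
        simp [Real.sign_zero, Real.zero_rpow (ne_of_gt hrpos),
          Real.zero_rpow (by positivity : q ≠ 0),
          Real.zero_rpow (show q/(q-1) ≠ 0 by positivity)]
      · have hbpos : 0 < |b| := abs_pos.mpr hbne
        have hsignb : Real.sign b * b = |b| := by
          rcases lt_trichotomy b 0 with h | h | h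
          · rw [Real.sign_of_neg h, abs_of_neg h]; ring
          · exact absurd h hbne
          · rw [Real.sign_of_pos h, abs_of_pos h]; ring
        have e1 : lam m * b = (α * μ m) ^ (-(1/(q-1))) * |b| ^ (q/(q-1)) := by
          rw [hlm]
          have h5 : |b| ^ (1/(q-1)) * |b| = |b| ^ (q/(q-1)) := by
            rw [show q/(q-1) = 1/(q-1) + 1 by field_simp; ring,
              Real.rpow_add hbpos, Real.rpow_one]
          calc Real.sign b * (α * μ m) ^ (-(1/(q-1))) * |b| ^ (1/(q-1)) * b
              = (α * μ m) ^ (-(1/(q-1))) * (|b| ^ (1/(q-1)) * (Real.sign b * b)) := by ring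
            _ = (α * μ m) ^ (-(1/(q-1))) * (|b| ^ (1/(q-1)) * |b|) := by rw [hsignb]
            _ = (α * μ m) ^ (-(1/(q-1))) * |b| ^ (q/(q-1)) := by rw [h5]
        have e2 : |lam m| ^ q = (α * μ m) ^ (-(q/(q-1))) * |b| ^ (q/(q-1)) := by
          rw [habslm, Real.mul_rpow (Real.rpow_nonneg hαμ.le _) (Real.rpow_nonneg (abs_nonneg b) _),
            ← Real.rpow_mul hαμ.le, ← Real.rpow_mul (abs_nonneg b)]
          rw [show -(1/(q-1)) * q = -(q/(q-1)) by ring,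
            show 1/(q-1) * q = q/(q-1) by ring]
        have e3 : (α * μ m) ^ (-(1/(q-1))) = α^(-(1/(q-1))) * ((μ m)^(-(q/(q-1))) * μ m) := by
          rw [Real.mul_rpow hα.le hμpos.le]
          congr 1
          rw [show -(1/(q-1)) = -(q/(q-1)) + 1 by field_simp; ring,
            Real.rpow_add hμpos, Real.rpow_one]
        have e4 : α * (α * μ m) ^ (-(q/(q-1))) = α^(-(1/(q-1))) * (μ m)^(-(q/(q-1))) := by
          rw [Real.mul_rpow hα.le hμpos.le]
          have h6 : α * α ^ (-(q/(q-1))) = α^(-(1/(q-1))) := by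
            rw [show -(1/(q-1)) = 1 + -(q/(q-1)) by field_simp; ring,
              Real.rpow_add hα, Real.rpow_one]
          calc α * (α ^ (-(q/(q-1))) * (μ m) ^ (-(q/(q-1))))
              = (α * α ^ (-(q/(q-1)))) * (μ m) ^ (-(q/(q-1))) := by ring
            _ = α^(-(1/(q-1))) * (μ m)^(-(q/(q-1))) := by rw [h6]
        rw [e1, e2, e3]
        rw [show α * ((α * μ m) ^ (-(q/(q-1))) * |b| ^ (q/(q-1)))
            = (α * (α * μ m) ^ (-(q/(q-1)))) * |b| ^ (q/(q-1)) by ring] at *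
        rw [e4]
        ring
    have hkey2 : E (x m) ≤ E z - (lam m * b) + α * |lam m| ^ q := by
      calc E (x m) ≤ E (z - lam m • φ m) := hstep1
        _ ≤ E z - (lam m * b) + α * |lam m| ^ q := by linarith [hUSm]
    rw [hbdef] at hkey
    linarith [hkey2, hkey.le, hkey.ge]
  -- nonnegativity of the decrease term, hence monotonicity
  have hdropnn : ∀ m, 2 ≤ m → 0 ≤ (μ m - 1) * (μ m)^(-(q/(q-1))) * α^(-(1/(q-1))) *
      |E' (x (m-1)) (φ m)|^(q/(q-1)) := by
    intro m hm
    have hμ1 : 1 < μ m := lt_of_le_of_lt (le_max_left _ _) (hμ m (by omega))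
    have hμpos : (0:ℝ) < μ m := by linarith
    have h1 := Real.rpow_nonneg (abs_nonneg (E' (x (m-1)) (φ m))) (q/(q-1))
    have h2 := Real.rpow_nonneg hμpos.le (-(q/(q-1)))
    have h3 := Real.rpow_nonneg hα.le (-(1/(q-1)))
    have h4 : (0:ℝ) ≤ μ m - 1 := by linarith
    exact mul_nonneg (mul_nonneg (mul_nonneg h4 h2) h3) h1
  have hmono : ∀ m, 2 ≤ m → E (x m) ≤ E (x (m-1)) := fun m hm =>
    le_trans (R2 m hm) (by linarith [hdropnn m hm])
  have hx0E : E (x 0) = E 0 := by rw [hx0]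
  intro k hk
  rcases eq_or_lt_of_le hN0 with hNz | hNpos
  · -- N = 0 : the minimizer is trivial
    have h1 := R1 k hk
    rw [← hNz, zero_mul] at h1
    have hwk := (hw k (by omega)).1
    have hak1 : E (x (k-1)) - E xb = 0 := by
      have h2 : 0 ≤ w k * (E (x (k-1)) - E xb) := mul_nonneg hwk.le (ha_nonneg (k-1))
      have h3 : w k * (E (x (k-1)) - E xb) = 0 := le_antisymm h1 h2
      rcases mul_eq_zero.mp h3 with h | h
      · exact absurd h (ne_of_gt hwk)
      · exact h
    have hak : E (x k) - E xb ≤ 0 := by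
      have := hmono k hk; linarith
    rw [← hNz, Real.zero_rpow (by positivity : q ≠ 0)]
    simp only [mul_zero, zero_mul, zero_div]
    linarith
  · -- N > 0
    have hA : 0 < α * N ^ q := mul_pos hα (Real.rpow_pos_of_pos hNpos q)
    -- the recursion in normalized form
    have R3 : ∀ m, 2 ≤ m → E (x m) - E xb ≤ (E (x (m-1)) - E xb) -
        ((μ m - 1) * (w m / μ m) ^ (q/(q-1))) *
          ((E (x (m-1)) - E xb)/(α * N ^ q))^(1/(q-1)) * (E (x (m-1)) - E xb) := by
      intro m hm
      have hμ1 : 1 < μ m := lt_of_le_of_lt (le_max_left _ _) (hμ m (by omega))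
      have hμpos : (0:ℝ) < μ m := by linarith
      have hwm := (hw m (by omega)).1
      rcases eq_or_lt_of_le (ha_nonneg (m-1)) with hz | hz
      · have h1 : E (x m) - E xb ≤ 0 := by have := hmono m hm; linarith
        rw [← hz]
        simpa using h1
      · have h1 := R1 m hm
        have hb_lb : w m * (E (x (m-1)) - E xb) / N ≤ |E' (x (m-1)) (φ m)| := by
          rw [div_le_iff₀ hNpos]; linarith
        have h2 := R2 m hm
        have h3 : (w m * (E (x (m-1)) - E xb) / N) ^ (q/(q-1)) ≤
            |E' (x (m-1)) (φ m)| ^ (q/(q-1)) :=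
          Real.rpow_le_rpow (by positivity) hb_lb (by positivity)
        have hcoef : (0:ℝ) ≤ (μ m - 1) * (μ m)^(-(q/(q-1))) * α^(-(1/(q-1))) :=
          mul_nonneg (mul_nonneg (by linarith) (Real.rpow_nonneg hμpos.le _))
            (Real.rpow_nonneg hα.le _)
        have h4 := mul_le_mul_of_nonneg_left h3 hcoef
        have hid : (μ m - 1) * (μ m)^(-(q/(q-1))) * α^(-(1/(q-1))) *
            (w m * (E (x (m-1)) - E xb) / N) ^ (q/(q-1))
            = ((μ m - 1) * (w m / μ m) ^ (q/(q-1))) *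
              ((E (x (m-1)) - E xb)/(α * N ^ q))^(1/(q-1)) * (E (x (m-1)) - E xb) := by
          set am := E (x (m-1)) - E xb with hamdef
          have hwp : (w m * am / N) ^ (q/(q-1)) =
              w m ^ (q/(q-1)) * am ^ (q/(q-1)) / N ^ (q/(q-1)) := by
            rw [Real.div_rpow (by positivity) hNpos.le, Real.mul_rpow hwm.le hz.le]
          have hamp : am ^ (q/(q-1)) = am ^ (1/(q-1)) * am := by
            rw [show q/(q-1) = 1/(q-1) + 1 by field_simp; ring, Real.rpow_add hz, Real.rpow_one]
          have hwμ : (w m / μ m) ^ (q/(q-1)) =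
              w m ^ (q/(q-1)) / μ m ^ (q/(q-1)) := Real.div_rpow hwm.le hμpos.le _
          have hden : (am / (α * N ^ q)) ^ (1/(q-1)) =
              am ^ (1/(q-1)) / (α ^ (1/(q-1)) * N ^ (q/(q-1))) := by
            rw [Real.div_rpow hz.le (by positivity),
              Real.mul_rpow hα.le (Real.rpow_nonneg hNpos.le q),
              ← Real.rpow_mul hNpos.le, show q * (1/(q-1)) = q/(q-1) by ring]
          have hμneg : (μ m)^(-(q/(q-1))) = (μ m ^ (q/(q-1)))⁻¹ := Real.rpow_neg hμpos.le _
          have hαneg : α^(-(1/(q-1))) = (α ^ (1/(q-1)))⁻¹ := Real.rpow_neg hα.le _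
          rw [hwp, hamp, hwμ, hden, hμneg, hαneg]
          have p1 : 0 < μ m ^ (q/(q-1)) := Real.rpow_pos_of_pos hμpos _
          have p2 : 0 < α ^ (1/(q-1)) := Real.rpow_pos_of_pos hα _
          have p3 : 0 < N ^ (q/(q-1)) := Real.rpow_pos_of_pos hNpos _
          field_simp
        rw [hid] at h4
        linarith
    have ha10 : E (x 1) - E xb ≤ E (x 0) - E xb := by
      rw [hx0]; linarith [hE0 1 le_rfl]
    have hc : ∀ j, 2 ≤ j → 0 < (μ j - 1) * (w j / μ j) ^ (q/(q-1)) := by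
      intro j hj
      have hμ1 : 1 < μ j := lt_of_le_of_lt (le_max_left _ _) (hμ j (by omega))
      have hμpos : (0:ℝ) < μ j := by linarith
      have hwj := (hw j (by omega)).1
      have : (0:ℝ) < w j / μ j := by positivity
      have := Real.rpow_pos_of_pos this (q/(q-1))
      nlinarith
    rcases eq_or_lt_of_le (ha_nonneg 0) with hz0 | hz0
    · -- E 0 = E xb : everything collapses to 0
      have hzero : ∀ j, 1 ≤ j → E (x j) - E xb = 0 := by
        intro j hj
        induction j, hj using Nat.le_induction with
        | base => exact le_antisymm (by linarith) (ha_nonneg 1)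
        | succ j hj ih =>
          have h1 : E (x (j+1)) ≤ E (x j) := by
            have := hmono (j+1) (by omega)
            simpa using this
          exact le_antisymm (by linarith) (ha_nonneg (j+1))
      have hS : 0 ≤ ∑ j ∈ Finset.Icc 2 k, (μ j - 1) * (w j / μ j) ^ (q / (q - 1)) :=
        Finset.sum_nonneg fun j hj => (hc j (Finset.mem_Icc.mp hj).1).le
      rw [← hx0E, ← hz0, div_zero, Real.zero_rpow (ne_of_gt hrpos), zero_add]
      have hR : 0 ≤ α * N ^ q *
          (∑ j ∈ Finset.Icc 2 k, (μ j - 1) * (w j / μ j) ^ (q / (q - 1))) ^ (1-q) :=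
        mul_nonneg hA.le (Real.rpow_nonneg hS _)
      linarith [hzero k (by omega)]
    · -- main case
      have hcl := wrpga_rate_aux (q-1) (α * N ^ q) hq1 hrge hA
        (fun m => E (x m) - E xb)
        (fun j => (μ j - 1) * (w j / μ j) ^ (q/(q-1)))
        ha_nonneg ha10 hz0 hc R3 k (by omega)
      rw [← hx0E]
      set T := (α * N ^ q / (E (x 0) - E xb)) ^ (1/(q-1)) +
        ∑ j ∈ Finset.Icc 2 k, (μ j - 1) * (w j / μ j) ^ (q/(q-1)) with hTdef
      have hS : 0 ≤ ∑ j ∈ Finset.Icc 2 k, (μ j - 1) * (w j / μ j) ^ (q / (q - 1)) :=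
        Finset.sum_nonneg fun j hj => (hc j (Finset.mem_Icc.mp hj).1).le
      have hT : 0 < T := by
        have : 0 < (α * N ^ q / (E (x 0) - E xb)) ^ (1/(q-1)) :=
          Real.rpow_pos_of_pos (by positivity) _
        rw [hTdef]; linarith
      have hak : (E (x k) - E xb) ^ (1/(q-1)) ≤ (α * N ^ q)^(1/(q-1)) / T := by
        rw [le_div_iff₀ hT]; exact hcl
      have h7 : E (x k) - E xb = ((E (x k) - E xb) ^ (1/(q-1))) ^ (q-1) := by
        rw [← Real.rpow_mul (ha_nonneg k), show 1/(q-1) * (q-1) = 1 by field_simp,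
          Real.rpow_one]
      rw [h7]
      calc ((E (x k) - E xb) ^ (1/(q-1))) ^ (q-1)
          ≤ ((α * N ^ q)^(1/(q-1)) / T) ^ (q-1) :=
            Real.rpow_le_rpow (Real.rpow_nonneg (ha_nonneg k) _) hak hq1.le
        _ = (α * N ^ q) / T ^ (q-1) := by
            rw [Real.div_rpow (Real.rpow_nonneg hA.le _) hT.le,
              ← Real.rpow_mul hA.le, show 1/(q-1) * (q-1) = 1 by field_simp,
              Real.rpow_one]
        _ = α * N ^ q * T ^ (1-q) := by
            rw [show (1-q:ℝ) = -(q-1) by ring, Real.rpow_neg hT.le, div_eq_mul_inv]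
end
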